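/- arXiv:1906.08503 — 6 statements merged into one kernel-verified Lean document; each statement's English description precedes it below -/
import Mathlib

section
/- Let T > 0, J = (0,T), and let U be an open subset of ℝ. Let k be absolutely continuous on [0,T] with derivative k̇ ∈ L₁(0,T), let H ∈ C¹(U), and let u ∈ L₁(J) with u(t) ∈ U for a.e. t ∈ J. Suppose that the functions t ↦ H(u(t)), t ↦ H'(u(t))u(t), and t ↦ H'(u(t))·(k̇ ∗ u)(t) belong to L₁(J). Then for almost every t ∈ J one has the fundamental identity H'(u(t)) · ∂_t(k ∗ u)(t) = ∂_t(k ∗ H(u))(t) + (−H(u(t)) + H'(u(t))u(t))·k(t) + ∫₀ᵗ (H(u(t−s)) − H(u(t)) − H'(u(t))[u(t−s) − u(t)])·(−k̇(s)) ds. -/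
open MeasureTheory Set

/-- Auxiliary: the convolution integrand of two `L¹` functions on `(0,T)` is
integrable on `(0,t)` for a.e. `t ∈ (0,T)`. -/
lemma conv_int_aux (T : ℝ) (f g : ℝ → ℝ)
    (hf : IntegrableOn f (Ioo 0 T)) (hg : IntegrableOn g (Ioo 0 T)) :
    ∀ᵐ t ∂(volume.restrict (Ioo 0 T)),
      IntegrableOn (fun s => f s * g (t - s)) (Ioo 0 t) := by
  set F : ℝ → ℝ := (Ioo (0:ℝ) T).indicator f
  set G : ℝ → ℝ := (Ioo (0:ℝ) T).indicator g
  have hF : Integrable F := (integrable_indicator_iff measurableSet_Ioo).2 hf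
  have hG : Integrable G := (integrable_indicator_iff measurableSet_Ioo).2 hg
  have h := (hF.convolution_integrand (ContinuousLinearMap.mul ℝ ℝ) hG).prod_right_ae
  have h' : ∀ᵐ t ∂(volume.restrict (Ioo 0 T)),
      Integrable (fun s => F s * G (t - s)) := ae_restrict_of_ae (by
    filter_upwards [h] with t ht
    simpa using ht)
  filter_upwards [h', ae_restrict_mem measurableSet_Ioo] with t ht htmem
  refine (ht.integrableOn).congr_fun ?_ measurableSet_Ioo
  intro s hs
  have h1 : s ∈ Ioo (0:ℝ) T := ⟨hs.1, hs.2.trans htmem.2⟩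
  have h2 : t - s ∈ Ioo (0:ℝ) T := ⟨by linarith [hs.2], by linarith [htmem.2, hs.1]⟩
  simp [F, G, indicator_of_mem h1, indicator_of_mem h2]

/-- **The fundamental identity** for integro-differential operators of the form
`∂ₜ(k ∗ ·)`, where `(k ∗ w)(t) = ∫₀ᵗ k(t-τ) w(τ) dτ` and, for `k ∈ H¹₁((0,T))`
with derivative `kdot`, `∂ₜ(k ∗ w)(t) = k(0) w(t) + ∫₀ᵗ kdot(s) w(t-s) ds`. -/
theorem fundamental_identity
    (T : ℝ) (hT : 0 < T) (U : Set ℝ) (hUopen : IsOpen U)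
    (k kdot : ℝ → ℝ)
    (hkdot : IntegrableOn kdot (Ioo 0 T))
    (hk : ∀ t ∈ Icc 0 T, k t = k 0 + ∫ s in (0:ℝ)..t, kdot s)
    (H H' : ℝ → ℝ)
    (hH : ∀ x ∈ U, HasDerivAt H (H' x) x)
    (hH'cont : ContinuousOn H' U)
    (u : ℝ → ℝ) (hu : IntegrableOn u (Ioo 0 T))
    (huU : ∀ᵐ t ∂(volume.restrict (Ioo 0 T)), u t ∈ U)
    (hHu : IntegrableOn (fun t => H (u t)) (Ioo 0 T))
    (hH'u : IntegrableOn (fun t => H' (u t) * u t) (Ioo 0 T))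
    (hH'kconv : IntegrableOn
      (fun t => H' (u t) * ∫ s in (0:ℝ)..t, kdot s * u (t - s)) (Ioo 0 T)) :
    ∀ᵐ t ∂(volume.restrict (Ioo 0 T)),
      H' (u t) * (k 0 * u t + ∫ s in (0:ℝ)..t, kdot s * u (t - s))
        = (k 0 * H (u t) + ∫ s in (0:ℝ)..t, kdot s * H (u (t - s)))
          + (-(H (u t)) + H' (u t) * u t) * k t
          + ∫ s in (0:ℝ)..t,
              (H (u (t - s)) - H (u t) - H' (u t) * (u (t - s) - u t)) * (-(kdot s)) := by
  filter_upwards [ae_restrict_mem measurableSet_Ioo,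
    conv_int_aux T kdot u hkdot hu,
    conv_int_aux T kdot (fun x => H (u x)) hkdot hHu] with t htmem hB hA
  have ht0 : (0:ℝ) ≤ t := le_of_lt htmem.1
  have hBint : IntervalIntegrable (fun s => kdot s * u (t - s)) volume 0 t :=
    (intervalIntegrable_iff_integrableOn_Ioo_of_le ht0).2 hB
  have hAint : IntervalIntegrable (fun s => kdot s * H (u (t - s))) volume 0 t :=
    (intervalIntegrable_iff_integrableOn_Ioo_of_le ht0).2 hA
  have hKint : IntervalIntegrable kdot volume 0 t :=
    (intervalIntegrable_iff_integrableOn_Ioo_of_le ht0).2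
      (hkdot.mono_set (Ioo_subset_Ioo le_rfl (le_of_lt htmem.2)))
  have key : ∀ s, (H (u (t - s)) - H (u t) - H' (u t) * (u (t - s) - u t)) * (-(kdot s))
      = (H (u t) * kdot s + H' (u t) * (kdot s * u (t - s)))
        - (kdot s * H (u (t - s)) + H' (u t) * u t * kdot s) := fun s => by ring
  simp only [key]
  rw [intervalIntegral.integral_sub ((hKint.const_mul _).add (hBint.const_mul _))
        (hAint.add (hKint.const_mul _)),
    intervalIntegral.integral_add (hKint.const_mul _) (hBint.const_mul _),
    intervalIntegral.integral_add hAint (hKint.const_mul _),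
    intervalIntegral.integral_const_mul, intervalIntegral.integral_const_mul,
    intervalIntegral.integral_const_mul,
    hk t ⟨ht0, le_of_lt htmem.2⟩]
  ring
end

section
/- Let α ∈ (0,1), T > 0, let u ∈ C¹([0,T];ℝ), and let H ∈ C¹(ℝ). Then for every t ∈ (0,T] the functions g_{1−α} ∗ u and g_{1−α} ∗ (H∘u) are differentiable at t, and the fundamental identity holds with the singular kernel g_{1−α}: H'(u(t)) · ∂_t^α u(t) = ∂_t^α (H∘u)(t) + (−H(u(t)) + H'(u(t))u(t))·g_{1−α}(t) + ∫₀ᵗ (H(u(t−s)) − H(u(t)) − H'(u(t))[u(t−s) − u(t)])·(α s^{−α−1}/Γ(1−α)) ds, where α s^{−α−1}/Γ(1−α) = −g_{1−α}'(s). -/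
/-!
Extend `u` to a C¹ function on `ℝ`. For a C¹ function `w` and a locally integrable kernel `g`
continuous at `t > 0`, one has
`∫₀^τ g(τ - s) w(s) ds = ∫₀^b g(s) w((τ - s)⁺) ds - w(0) ∫_τ^b g`,
and the new integrand is Lipschitz in `τ`, so differentiating under the integral sign gives
`(g ∗ w)'(t) = g(t) w(0) + ∫₀^t g(s) w'(t - s) ds`. Applied to `w = u` and `w = H ∘ u`, the
identity reduces to an integration by parts of `∫₀^t R(s) (-g'(s)) ds` with
`R(s) = H(u(t-s)) - H(u(t)) - H'(u(t)) (u(t-s) - u(t))`: since `R(0) = 0` we have `|R(s)| ≤ C s`,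
which makes `R g` vanish at `0` and `R g'` integrable.
-/

open MeasureTheory Set

/-- The standard kernel `g_β(t) = t^(β-1)/Γ(β)`. -/
noncomputable def stdKernel (β t : ℝ) : ℝ := t ^ (β - 1) / Real.Gamma β

open Filter Topology

lemma stdKernel_one_sub (α s : ℝ) : stdKernel (1 - α) s = s ^ (-α) / Real.Gamma (1 - α) := by
  rw [stdKernel, sub_sub_cancel_left]

lemma intervalIntegrable_stdKernel {β : ℝ} (hβ : 0 < β) (a b : ℝ) :
    IntervalIntegrable (stdKernel β) volume a b :=
  (intervalIntegral.intervalIntegrable_rpow' (by linarith)).div_const _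

lemma continuousOn_stdKernel (β : ℝ) : ContinuousOn (stdKernel β) (Ioi 0) := fun s hs =>
  ((Real.continuousAt_rpow_const s _ (Or.inl (ne_of_gt hs))).div_const _).continuousWithinAt

theorem exists_hasDerivAt_eqOn_Icc {a b : ℝ} (hab : a ≤ b) {u u' : ℝ → ℝ}
    (hu : ∀ x ∈ Icc a b, HasDerivWithinAt u (u' x) (Icc a b) x)
    (hu' : ContinuousOn u' (Icc a b)) :
    ∃ v v' : ℝ → ℝ, (∀ x, HasDerivAt v (v' x) x) ∧ Continuous v' ∧ EqOn v u (Icc a b) := by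
  set v' : ℝ → ℝ := fun x => u' (projIcc a b hab x)
  have hv' : Continuous v' := hu'.comp_continuous
    (continuous_subtype_val.comp continuous_projIcc) fun x => (projIcc a b hab x).2
  have hv'u : EqOn v' u' (Icc a b) := fun x hx => by simp only [v', projIcc_of_mem hab hx]
  refine ⟨fun x => u a + ∫ y in a..x, v' y, v',
    fun x => (hv'.integral_hasStrictDerivAt a x).hasDerivAt.const_add (u a), hv', fun x hx => ?_⟩
  have hderiv : ∀ y ∈ Ioo a x, HasDerivWithinAt u (v' y) (Ioi y) y := fun y hy => by
    have hy' : y ∈ Icc a b := ⟨hy.1.le, hy.2.le.trans hx.2⟩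
    rw [hv'u hy']
    exact ((hu y hy').hasDerivAt (Icc_mem_nhds hy.1 (hy.2.trans_le hx.2))).hasDerivWithinAt
  have hcont : ContinuousOn u (Icc a x) := fun y hy =>
    (hu y ⟨hy.1, hy.2.trans hx.2⟩).continuousWithinAt.mono (Icc_subset_Icc_right hx.2)
  change u a + ∫ y in a..x, v' y = u x
  rw [intervalIntegral.integral_eq_sub_of_hasDeriv_right_of_le hx.1 hcont hderiv
    (hv'.intervalIntegrable a x), add_sub_cancel]

section Convolution

variable {g w w' : ℝ → ℝ}

lemma exists_lipschitzOnWith_Icc_of_hasDerivAt (hw : ∀ x, HasDerivAt w (w' x) x)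
    (hw' : Continuous w') (a b : ℝ) : ∃ K, LipschitzOnWith K w (Icc a b) := by
  obtain ⟨C, hC⟩ :=
    (isCompact_Icc (a := a) (b := b)).exists_bound_of_continuousOn hw'.continuousOn
  refine ⟨C.toNNReal, (convex_Icc a b).lipschitzOnWith_of_nnnorm_hasDerivWithin_le
    (fun x _ => (hw x).hasDerivWithinAt) fun x hx => ?_⟩
  rw [← NNReal.coe_le_coe, coe_nnnorm]
  exact (hC x hx).trans (Real.le_coe_toNNReal C)

lemma LipschitzOnWith.comp_max_zero {K} {M : ℝ} (hM : 0 ≤ M)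
    (hw : LipschitzOnWith K w (Icc 0 M)) : LipschitzOnWith K (fun x => w (max x 0)) (Iic M) := by
  have h := hw.comp (LipschitzWith.id.max_const 0).lipschitzOnWith
    (s := Iic M) fun x hx => ⟨le_max_right x 0, max_le hx hM⟩
  rwa [mul_one] at h

lemma hasDerivAt_integral_mul_comp_max_zero {b t : ℝ} (hg : IntervalIntegrable g volume 0 b)
    (hw : ∀ x, HasDerivAt w (w' x) x) (hw' : Continuous w') (ht : t ∈ Icc 0 b) :
    HasDerivAt (fun τ => ∫ s in (0:ℝ)..b, g s * w (max (τ - s) 0))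
      (∫ s in (0:ℝ)..t, g s * w' (t - s)) t := by
  have hb : 0 ≤ b := ht.1.trans ht.2
  obtain ⟨K, hK⟩ := exists_lipschitzOnWith_Icc_of_hasDerivAt hw hw' 0 (t + 1)
  have hW := hK.comp_max_zero (by linarith [ht.1])
  have hint : ∀ {f : ℝ → ℝ}, Continuous f → IntervalIntegrable (fun s => g s * f s) volume 0 b :=
    fun hf => hg.mul_continuousOn hf.continuousOn
  have hwc : Continuous w := continuous_iff_continuousAt.2 fun x => (hw x).continuousAt
  have key := intervalIntegral.hasDerivAt_integral_of_dominated_loc_of_lip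
    (F := fun τ s => g s * w (max (τ - s) 0))
    (F' := {s | s ≤ t}.indicator fun s => g s * w' (t - s))
    (bound := fun s => g s * K) (Metric.ball_mem_nhds t one_pos)
    (Eventually.of_forall fun τ => (hint (by fun_prop)).aestronglyMeasurable_restrict_uIoc)
    (hint (by fun_prop)) ?_ ?_ (hg.mul_const _) ?_
  · rw [intervalIntegral.integral_indicator ht] at key
    exact key.2
  · exact (hint (by fun_prop)).aestronglyMeasurable_restrict_uIoc.indicator measurableSet_Iic
  · refine ae_of_all _ fun s hs => LipschitzOnWith.of_dist_le_mul fun x hx y hy => ?_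
    rw [uIoc_of_le hb] at hs
    have hmem : ∀ z ∈ Metric.ball t 1, z - s ∈ Iic (t + 1) := fun z hz => by
      have := (abs_lt.1 (Real.dist_eq z t ▸ Metric.mem_ball.1 hz)).2
      simp only [mem_Iic]; linarith [hs.1]
    rw [Real.coe_nnabs, Real.dist_eq, Real.dist_eq, ← mul_sub, abs_mul, abs_mul,
      NNReal.abs_eq, mul_assoc]
    gcongr
    simpa [Real.dist_eq] using hW.dist_le_mul _ (hmem x hx) _ (hmem y hy)
  · filter_upwards [volume.ae_ne t] with s hst _
    rcases hst.lt_or_gt with hs | hs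
    · have hd : HasDerivAt (fun x => g s * w (x - s)) (g s * w' (t - s)) t := by
        simpa using ((hw (t - s)).comp t ((hasDerivAt_id t).sub_const s)).const_mul (g s)
      simp only [indicator_of_mem (show s ∈ {s | s ≤ t} from hs.le)]
      refine hd.congr_of_eventuallyEq ?_
      filter_upwards [eventually_gt_nhds hs] with x hx
      rw [max_eq_left (by linarith)]
    · simp only [indicator_of_notMem (show s ∉ {s | s ≤ t} from hs.not_ge)]
      refine (hasDerivAt_const t (g s * w 0)).congr_of_eventuallyEq ?_
      filter_upwards [eventually_lt_nhds hs] with x hx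
      rw [max_eq_right (by linarith)]

lemma integral_conv_eq_integral_mul_comp_max_zero {b τ : ℝ}
    (hg : IntervalIntegrable g volume 0 b) (hw : Continuous w) (hτ : τ ∈ Icc 0 b) :
    ∫ s in (0:ℝ)..τ, g (τ - s) * w s
      = (∫ s in (0:ℝ)..b, g s * w (max (τ - s) 0)) - w 0 * ∫ s in τ..b, g s := by
  have hint : ∀ {c d}, IntervalIntegrable g volume c d →
      IntervalIntegrable (fun s => g s * w (max (τ - s) 0)) volume c d := fun h =>
    h.mul_continuousOn (by fun_prop : Continuous fun s => w (max (τ - s) 0)).continuousOn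
  have hτ' : τ ∈ uIcc 0 b := by rwa [uIcc_of_le (hτ.1.trans hτ.2)]
  have hreflect : ∫ s in (0:ℝ)..τ, g (τ - s) * w s = ∫ s in (0:ℝ)..τ, g s * w (τ - s) := by
    simpa using intervalIntegral.integral_comp_sub_left (a := 0) (b := τ)
      (fun s => g s * w (τ - s)) τ
  have hleft : ∫ s in (0:ℝ)..τ, g s * w (max (τ - s) 0) = ∫ s in (0:ℝ)..τ, g s * w (τ - s) :=
    intervalIntegral.integral_congr fun s hs => by
      rw [uIcc_of_le hτ.1] at hs
      simp only [max_eq_left (sub_nonneg.2 hs.2)]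
  have hright : ∫ s in τ..b, g s * w (max (τ - s) 0) = w 0 * ∫ s in τ..b, g s := by
    rw [← intervalIntegral.integral_const_mul]
    refine intervalIntegral.integral_congr fun s hs => ?_
    rw [uIcc_of_le hτ.2] at hs
    simp only [max_eq_right (sub_nonpos.2 hs.1), mul_comm]
  rw [hreflect, ← intervalIntegral.integral_add_adjacent_intervals
    (hint (hg.mono_set (uIcc_subset_uIcc_left hτ')))
    (hint (hg.mono_set (uIcc_subset_uIcc_right hτ'))), hleft, hright, add_sub_cancel_right]

theorem hasDerivAt_integral_conv {t : ℝ} (hg : ∀ b, IntervalIntegrable g volume 0 b)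
    (hgc : ContinuousOn g (Ioi 0)) (hw : ∀ x, HasDerivAt w (w' x) x) (hw' : Continuous w')
    (ht : 0 < t) :
    HasDerivAt (fun τ => ∫ s in (0:ℝ)..τ, g (τ - s) * w s)
      (g t * w 0 + ∫ s in (0:ℝ)..t, g s * w' (t - s)) t := by
  have hwc : Continuous w := continuous_iff_continuousAt.2 fun x => (hw x).continuousAt
  have htail : HasDerivAt (fun τ => ∫ s in τ..t + 1, g s) (-g t) t :=
    intervalIntegral.integral_hasDerivAt_left ((hg (t + 1)).mono_set (uIcc_subset_uIcc_right
      (mem_uIcc.2 (Or.inl ⟨ht.le, by linarith⟩))))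
      (hgc.stronglyMeasurableAtFilter isOpen_Ioi t ht) (hgc.continuousAt (Ioi_mem_nhds ht))
  have hmain := hasDerivAt_integral_mul_comp_max_zero (hg (t + 1)) hw hw'
    ⟨ht.le, (lt_add_one t).le⟩
  refine ((hmain.sub (htail.const_mul (w 0))).congr_of_eventuallyEq ?_).congr_deriv (by ring)
  filter_upwards [Ioo_mem_nhds ht (lt_add_one t)] with τ hτ
  exact integral_conv_eq_integral_mul_comp_max_zero (hg _) hwc (Ioo_subset_Icc_self hτ)

lemma Set.EqOn.intervalIntegral_conv {f₁ f₂ : ℝ → ℝ} {T : ℝ} (h : EqOn f₁ f₂ (Icc 0 T)) :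
    EqOn (fun τ => ∫ s in (0:ℝ)..τ, g (τ - s) * f₁ s)
      (fun τ => ∫ s in (0:ℝ)..τ, g (τ - s) * f₂ s) (Icc 0 T) := fun τ hτ =>
  intervalIntegral.integral_congr fun s hs => by
    rw [uIcc_of_le hτ.1] at hs
    simp only [h ⟨hs.1, hs.2.trans hτ.2⟩]

end Convolution

section IntegrationByParts

variable {R R' : ℝ → ℝ} {t α L : ℝ}

lemma exists_abs_le_mul_of_apply_zero (hR : ∀ s, HasDerivAt R (R' s) s) (hR' : Continuous R')
    (hR0 : R 0 = 0) (ht : 0 ≤ t) : ∃ L, ∀ s ∈ Icc 0 t, |R s| ≤ L * s := by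
  obtain ⟨L, hL⟩ :=
    (isCompact_Icc (a := 0) (b := t)).exists_bound_of_continuousOn hR'.continuousOn
  refine ⟨L, fun s hs => ?_⟩
  have h := (convex_Icc 0 t).norm_image_sub_le_of_norm_hasDerivWithin_le
    (fun x _ => (hR x).hasDerivWithinAt) hL (left_mem_Icc.2 ht) hs
  rwa [hR0, sub_zero, sub_zero, Real.norm_eq_abs, Real.norm_eq_abs, abs_of_nonneg hs.1] at h

lemma intervalIntegrable_mul_rpow_neg_sub_one (hα : α < 1) (hR : Continuous R)
    (hRL : ∀ s ∈ Icc 0 t, |R s| ≤ L * s) (ht : 0 ≤ t) :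
    IntervalIntegrable (fun s => R s * s ^ (-α - 1)) volume 0 t := by
  rw [intervalIntegrable_iff_integrableOn_Ioc_of_le ht]
  refine Integrable.mono' (g := fun s => L * s ^ (-α)) ?_ ?_ ?_
  · exact ((intervalIntegral.intervalIntegrable_rpow' (by linarith)).const_mul L).def'.mono_set
      (by rw [uIoc_of_le ht])
  · refine (hR.continuousOn.mul fun s hs => ?_).aestronglyMeasurable measurableSet_Ioc
    exact (Real.continuousAt_rpow_const s _ (Or.inl hs.1.ne')).continuousWithinAt
  · refine (ae_restrict_iff' measurableSet_Ioc).2 (ae_of_all _ fun s hs => ?_)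
    have hpow : s ^ (-α - 1) * s = s ^ (-α) := by
      rw [← Real.rpow_add_one hs.1.ne', sub_add_cancel]
    rw [Real.norm_eq_abs, abs_mul, abs_of_nonneg (Real.rpow_nonneg hs.1.le _), ← hpow]
    nlinarith [hRL s (Ioc_subset_Icc_self hs), Real.rpow_nonneg hs.1.le (-α - 1)]

lemma continuousOn_mul_rpow_neg (hα : α < 1) (hR : Continuous R)
    (hRL : ∀ s ∈ Icc 0 t, |R s| ≤ L * s) :
    ContinuousOn (fun s => R s * s ^ (-α)) (Icc 0 t) := by
  intro s hs
  rcases hs.1.eq_or_lt with rfl | hs0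
  · have hR0 : R 0 = 0 := abs_nonpos_iff.1 (by simpa using hRL 0 hs)
    have hbound : Tendsto (fun s : ℝ => L * s ^ (1 - α)) (𝓝[Icc 0 t] 0) (𝓝 0) := by
      have := ((Real.continuousAt_rpow_const 0 (1 - α) (Or.inr (by linarith))).const_mul
        L).continuousWithinAt (s := Icc 0 t)
      rwa [ContinuousWithinAt, Real.zero_rpow (by linarith), mul_zero] at this
    rw [ContinuousWithinAt, hR0, zero_mul]
    refine squeeze_zero_norm' ?_ hbound
    filter_upwards [self_mem_nhdsWithin] with s hs
    rw [Real.norm_eq_abs, abs_mul, abs_of_nonneg (Real.rpow_nonneg hs.1 _), sub_eq_add_neg,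
      Real.rpow_add' hs.1 (by linarith), Real.rpow_one, ← mul_assoc]
    exact mul_le_mul_of_nonneg_right (hRL s hs) (Real.rpow_nonneg hs.1 _)
  · exact (hR.continuousAt.mul
      (Real.continuousAt_rpow_const s _ (Or.inl hs0.ne'))).continuousWithinAt

theorem integral_mul_rpow_neg_sub_one_eq (hα : α < 1) (hR : ∀ s, HasDerivAt R (R' s) s)
    (hR' : Continuous R') (hR0 : R 0 = 0) (ht : 0 ≤ t) :
    ∫ s in (0:ℝ)..t, R s * (α * s ^ (-α - 1))
      = (∫ s in (0:ℝ)..t, R' s * s ^ (-α)) - R t * t ^ (-α) := by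
  obtain ⟨L, hRL⟩ := exists_abs_le_mul_of_apply_zero hR hR' hR0 ht
  have hRc : Continuous R := continuous_iff_continuousAt.2 fun x => (hR x).continuousAt
  have hint₁ : IntervalIntegrable (fun s => R' s * s ^ (-α)) volume 0 t :=
    (intervalIntegral.intervalIntegrable_rpow' (by linarith)).continuousOn_mul hR'.continuousOn
  have hint₂ : IntervalIntegrable (fun s => R s * (α * s ^ (-α - 1))) volume 0 t := by
    simpa only [mul_left_comm] using
      (intervalIntegrable_mul_rpow_neg_sub_one hα hRc hRL ht).const_mul α
  have hderiv : ∀ s ∈ Ioo 0 t, HasDerivWithinAt (fun s => R s * s ^ (-α))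
      (R' s * s ^ (-α) - R s * (α * s ^ (-α - 1))) (Ioi s) s := fun s hs =>
    ((hR s).mul (Real.hasDerivAt_rpow_const (p := -α) (Or.inl hs.1.ne'))).hasDerivWithinAt
      |>.congr_deriv (by ring)
  have hFTC := intervalIntegral.integral_eq_sub_of_hasDeriv_right_of_le ht
    (continuousOn_mul_rpow_neg hα hRc hRL) hderiv (hint₁.sub hint₂)
  rw [intervalIntegral.integral_sub hint₁ hint₂, hR0, zero_mul, sub_zero] at hFTC
  linarith

end IntegrationByParts

theorem fundamental_identity_of_hasDerivAt {α t : ℝ} (hα : α < 1) (ht : 0 < t)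
    {v v' H H' : ℝ → ℝ} (hv : ∀ x, HasDerivAt v (v' x) x) (hv' : Continuous v')
    (hH : ∀ x, HasDerivAt H (H' x) x) (hH' : Continuous H') :
    H' (v t) * (stdKernel (1 - α) t * v 0 + ∫ s in (0:ℝ)..t, stdKernel (1 - α) s * v' (t - s))
      = (stdKernel (1 - α) t * H (v 0)
          + ∫ s in (0:ℝ)..t, stdKernel (1 - α) s * (H' (v (t - s)) * v' (t - s)))
        + (-(H (v t)) + H' (v t) * v t) * stdKernel (1 - α) t
        + ∫ s in (0:ℝ)..t, (H (v (t - s)) - H (v t) - H' (v t) * (v (t - s) - v t))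
            * (α * s ^ (-α - 1) / Real.Gamma (1 - α)) := by
  have hvc : Continuous v := continuous_iff_continuousAt.2 fun x => (hv x).continuousAt
  set R : ℝ → ℝ := fun s => H (v (t - s)) - H (v t) - H' (v t) * (v (t - s) - v t)
  set R' : ℝ → ℝ := fun s => (H' (v t) - H' (v (t - s))) * v' (t - s)
  have hR : ∀ s, HasDerivAt R (R' s) s := fun s => by
    have hvs : HasDerivAt (fun s => v (t - s)) (v' (t - s) * -1) s :=
      (hv (t - s)).comp s ((hasDerivAt_id s).const_sub t)
    refine ((((hH _).comp s hvs).sub_const _).sub ((hvs.sub_const _).const_mul _)).congr_deriv ?_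
    simp only [R']; ring
  have hIBP := integral_mul_rpow_neg_sub_one_eq hα hR (by fun_prop) (by simp [R]) ht.le
  have hk := intervalIntegrable_stdKernel (β := 1 - α) (by linarith) 0 t
  have hsplit : H' (v t) * (∫ s in (0:ℝ)..t, stdKernel (1 - α) s * v' (t - s))
      - ∫ s in (0:ℝ)..t, stdKernel (1 - α) s * (H' (v (t - s)) * v' (t - s))
      = (∫ s in (0:ℝ)..t, R' s * s ^ (-α)) / Real.Gamma (1 - α) := by
    rw [← intervalIntegral.integral_const_mul, ← intervalIntegral.integral_sub
      ((hk.mul_continuousOn (by fun_prop)).const_mul _) (hk.mul_continuousOn (by fun_prop)),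
      ← intervalIntegral.integral_div]
    refine intervalIntegral.integral_congr fun s _ => ?_
    simp only [R', stdKernel_one_sub]; ring
  have hdiv : ∫ s in (0:ℝ)..t, R s * (α * s ^ (-α - 1) / Real.Gamma (1 - α))
      = (∫ s in (0:ℝ)..t, R s * (α * s ^ (-α - 1))) / Real.Gamma (1 - α) := by
    rw [← intervalIntegral.integral_div]
    exact intervalIntegral.integral_congr fun s _ => (mul_div_assoc _ _ _).symm
  have hRt : R t = H (v 0) - H (v t) - H' (v t) * (v 0 - v t) := by simp only [R, sub_self]
  rw [hdiv, hIBP]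
  linear_combination hsplit + (H' (v t) * v 0 - H (v 0) + H (v t) - H' (v t) * v t)
    * stdKernel_one_sub α t + t ^ (-α) / Real.Gamma (1 - α) * hRt

/-- **The fundamental identity with the singular kernel `g_{1-α}`**: for `u ∈ C¹([0,T])`
and `H ∈ C¹(ℝ)`, for every `t ∈ (0,T]` the convolutions `g_{1-α} ∗ u` and
`g_{1-α} ∗ H(u)` are differentiable at `t` (within `[0,T]`) with derivatives
`∂ₜᵅ u(t)` and `∂ₜᵅ (H∘u)(t)` satisfying the fundamental identity, where
`-g_{1-α}'(s) = α s^(-α-1)/Γ(1-α)`. -/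
theorem fundamental_identity_singular_kernel
    (α T : ℝ) (hα : α ∈ Ioo (0:ℝ) 1) (hT : 0 < T)
    (u u' : ℝ → ℝ)
    (hu : ∀ t ∈ Icc 0 T, HasDerivWithinAt u (u' t) (Icc 0 T) t)
    (hu' : ContinuousOn u' (Icc 0 T))
    (H H' : ℝ → ℝ)
    (hH : ∀ x : ℝ, HasDerivAt H (H' x) x)
    (hH'cont : Continuous H') :
    ∀ t ∈ Ioc 0 T, ∃ Du DH : ℝ,
      HasDerivWithinAt (fun τ => ∫ s in (0:ℝ)..τ, stdKernel (1 - α) (τ - s) * u s)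
        Du (Icc 0 T) t ∧
      HasDerivWithinAt (fun τ => ∫ s in (0:ℝ)..τ, stdKernel (1 - α) (τ - s) * H (u s))
        DH (Icc 0 T) t ∧
      H' (u t) * Du
        = DH + (-(H (u t)) + H' (u t) * u t) * stdKernel (1 - α) t
          + ∫ s in (0:ℝ)..t,
              (H (u (t - s)) - H (u t) - H' (u t) * (u (t - s) - u t))
                * (α * s ^ (-α - 1) / Real.Gamma (1 - α)) := by
  intro t ht
  obtain ⟨v, v', hv, hv', hvu⟩ := exists_hasDerivAt_eqOn_Icc hT.le hu hu'
  have hk := intervalIntegrable_stdKernel (β := 1 - α) (by linarith [hα.2]) 0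
  have htT : t ∈ Icc 0 T := Ioc_subset_Icc_self ht
  have hvc : Continuous v := continuous_iff_continuousAt.2 fun x => (hv x).continuousAt
  have hHv : ∀ x, HasDerivAt (H ∘ v) (H' (v x) * v' x) x := fun x => (hH (v x)).comp x (hv x)
  have hDu := hasDerivAt_integral_conv hk (continuousOn_stdKernel _) hv hv' ht.1
  have hDH := hasDerivAt_integral_conv hk (continuousOn_stdKernel _) hHv (by fun_prop) ht.1
  refine ⟨_, _, hDu.hasDerivWithinAt.congr hvu.symm.intervalIntegral_conv
      (hvu.symm.intervalIntegral_conv htT),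
    hDH.hasDerivWithinAt.congr hvu.symm.comp_left.intervalIntegral_conv
      (hvu.symm.comp_left.intervalIntegral_conv htT), ?_⟩
  have hrem : EqOn (fun s => H (u (t - s)) - H (u t) - H' (u t) * (u (t - s) - u t))
      (fun s => H (v (t - s)) - H (v t) - H' (v t) * (v (t - s) - v t)) (uIcc 0 t) :=
    fun s hs => by
      rw [uIcc_of_le ht.1.le] at hs
      simp only [hvu htT, hvu (show t - s ∈ Icc 0 T by constructor <;> linarith [hs.1, hs.2, ht.2])]
  rw [intervalIntegral.integral_congr fun s hs => congrArg (· * _) (hrem hs), ← hvu htT]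
  exact fundamental_identity_of_hasDerivAt hα.2 ht.1 hv hv' hH hH'cont
end

section
/- Let T > 0, J = (0,T), and let U be an open subset of ℝ. Let k be absolutely continuous on [0,T] with derivative k̇ ∈ L₁(0,T), and assume in addition that k is nonnegative and nonincreasing on [0,T]. Let H ∈ C¹(U) be convex, let u₀ ∈ U, and let u ∈ L₁(J) with u(t) ∈ U a.e. be such that H(u), H'(u)u, and H'(u)(k̇ ∗ u) belong to L₁(J). Then for almost every t ∈ J, H'(u(t)) · ∂_t(k ∗ [u − u₀])(t) ≥ ∂_t(k ∗ [H(u) − H(u₀)])(t). -/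
open MeasureTheory Set

/-- Tangent line inequality for a convex differentiable function. -/
theorem tangent_line_le' {U : Set ℝ} {H H' : ℝ → ℝ}
    (hHconvex : ConvexOn ℝ U H)
    (hH : ∀ x ∈ U, HasDerivAt H (H' x) x)
    {x y : ℝ} (hx : x ∈ U) (hy : y ∈ U) :
    H x + H' x * (y - x) ≤ H y := by
  rcases lt_trichotomy x y with h | h | h
  · have hs := hHconvex.le_slope_of_hasDerivAt hx hy h (hH x hx)
    rw [slope_def_field] at hs
    have h' : 0 < y - x := by linarith
    have := (le_div_iff₀ h').1 hs
    linarith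
  · subst h; simp
  · have hs := hHconvex.slope_le_of_hasDerivAt hy hx h (hH x hx)
    rw [slope_def_field] at hs
    have h' : 0 < x - y := by linarith
    have h2 := (div_le_iff₀ h').1 hs
    have h3 : H' x * (y - x) = -(H' x * (x - y)) := by ring
    linarith

/-- If integrals of `f` over all subintervals of `(0,T)` are nonpositive then `f ≤ 0`
a.e. on `(0,T)`. -/
theorem ae_nonpos_of_setIntegral_Ioc_nonpos
    {T : ℝ} {f : ℝ → ℝ} (hf : IntegrableOn f (Ioo 0 T))
    (h : ∀ a b : ℝ, 0 ≤ a → a ≤ b → b ≤ T → (∫ s in Ioc a b, f s) ≤ 0) :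
    ∀ᵐ x, x ∈ Ioo 0 T → f x ≤ 0 := by
  set g := (Ioo 0 T).indicator f with hgdef
  have hgi : Integrable g := (integrable_indicator_iff measurableSet_Ioo).2 hf
  have key : ∀ x : ℝ, ∀ r : ℝ, 0 < r → (∫ y in Metric.closedBall x r, g y) ≤ 0 := by
    intro x r _
    rw [Real.closedBall_eq_Icc, setIntegral_indicator measurableSet_Ioo]
    set a := max (x - r) 0 with ha
    set b := min (x + r) T with hb
    have hsub1 : Icc (x - r) (x + r) ∩ Ioo 0 T ⊆ Icc a b := by
      rintro z ⟨⟨h1, h2⟩, h3, h4⟩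
      exact ⟨max_le h1 h3.le, le_min h2 h4.le⟩
    by_cases hab : a < b
    · have hsub2 : Ioo a b ⊆ Icc (x - r) (x + r) ∩ Ioo 0 T := by
        rintro z ⟨h1, h2⟩
        refine ⟨⟨(le_max_left _ _).trans h1.le, h2.le.trans (min_le_left _ _)⟩,
          lt_of_le_of_lt (le_max_right _ _) h1, lt_of_lt_of_le h2 (min_le_right _ _)⟩
      have hae : ((Icc (x - r) (x + r) ∩ Ioo 0 T : Set ℝ)) =ᵐ[volume] (Ioc a b : Set ℝ) := by
        rw [MeasureTheory.ae_eq_set]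
        constructor
        · refine measure_mono_null (fun z hz => ?_) (measure_singleton a)
          obtain ⟨hz1, hz2⟩ := hz
          have hz3 := hsub1 hz1
          have : z ≤ a := by
            by_contra hcon
            exact hz2 ⟨lt_of_not_ge hcon, hz3.2⟩
          exact le_antisymm this hz3.1
        · refine measure_mono_null (fun z hz => ?_) (measure_singleton b)
          obtain ⟨hz1, hz2⟩ := hz
          have : z = b ∨ z ∈ Ioo a b := by
            rcases lt_or_eq_of_le hz1.2 with h' | h'
            · exact Or.inr ⟨hz1.1, h'⟩
            · exact Or.inl h'
          rcases this with h' | h'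
          · exact h'
          · exact absurd (hsub2 h') hz2
      rw [setIntegral_congr_set hae]
      exact h a b (le_max_right _ _) hab.le (min_le_right _ _)
    · have hnull : volume (Icc (x - r) (x + r) ∩ Ioo 0 T) = 0 := by
        refine measure_mono_null hsub1 ?_
        rw [Real.volume_Icc]
        exact ENNReal.ofReal_eq_zero.2 (by linarith [le_of_not_gt hab])
      rw [Measure.restrict_eq_zero.2 hnull, integral_zero_measure]
  have hloc : LocallyIntegrable g := hgi.locallyIntegrable
  filter_upwards [IsUnifLocDoublingMeasure.ae_tendsto_average (μ := volume) hloc 1] with x hx hxT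
  have hav : Filter.Tendsto (fun r : ℝ => ⨍ y in Metric.closedBall x r, g y)
      (nhdsWithin 0 (Ioi 0)) (nhds (g x)) := by
    refine hx (fun _ => x) id Filter.tendsto_id ?_
    filter_upwards [self_mem_nhdsWithin] with r hr
    simp only [Metric.mem_closedBall, dist_self, one_mul]
    exact le_of_lt hr
  have hgle : g x ≤ 0 := by
    refine le_of_tendsto hav ?_
    filter_upwards [self_mem_nhdsWithin] with r hr
    rw [setAverage_eq, smul_eq_mul]
    exact mul_nonpos_of_nonneg_of_nonpos (by positivity) (key x r hr)
  rw [hgdef, indicator_of_mem hxT] at hgle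
  exact hgle

/-- **Convexity inequality** for integro-differential operators `∂ₜ(k ∗ ·)` with a
nonnegative nonincreasing kernel `k ∈ H¹₁((0,T))` (with derivative `kdot`), where
`∂ₜ(k ∗ w)(t) = k(0) w(t) + ∫₀ᵗ kdot(s) w(t-s) ds`, applied to `u - u₀` and to
`H(u) - H(u₀)` for a convex `C¹` function `H` on the open set `U`. -/
theorem convexity_inequality
    (T : ℝ) (hT : 0 < T) (U : Set ℝ) (hUopen : IsOpen U)
    (k kdot : ℝ → ℝ)
    (hkdot : IntegrableOn kdot (Ioo 0 T))
    (hk : ∀ t ∈ Icc 0 T, k t = k 0 + ∫ s in (0:ℝ)..t, kdot s)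
    (hknonneg : ∀ t ∈ Icc 0 T, 0 ≤ k t)
    (hkmono : ∀ s ∈ Icc 0 T, ∀ t ∈ Icc 0 T, s ≤ t → k t ≤ k s)
    (H H' : ℝ → ℝ)
    (hH : ∀ x ∈ U, HasDerivAt H (H' x) x)
    (hH'cont : ContinuousOn H' U)
    (hHconvex : ConvexOn ℝ U H)
    (u₀ : ℝ) (hu₀ : u₀ ∈ U)
    (u : ℝ → ℝ) (hu : IntegrableOn u (Ioo 0 T))
    (huU : ∀ᵐ t ∂(volume.restrict (Ioo 0 T)), u t ∈ U)
    (hHu : IntegrableOn (fun t => H (u t)) (Ioo 0 T))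
    (hH'u : IntegrableOn (fun t => H' (u t) * u t) (Ioo 0 T))
    (hH'kconv : IntegrableOn
      (fun t => H' (u t) * ∫ s in (0:ℝ)..t, kdot s * u (t - s)) (Ioo 0 T)) :
    ∀ᵐ t ∂(volume.restrict (Ioo 0 T)),
      H' (u t) * (k 0 * (u t - u₀) + ∫ s in (0:ℝ)..t, kdot s * (u (t - s) - u₀))
        ≥ k 0 * (H (u t) - H u₀) + ∫ s in (0:ℝ)..t, kdot s * (H (u (t - s)) - H u₀) := by
  -- the kernel is integrable on all subintervals `Ioc a b` of `[0, T]`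
  have hkdot' : IntegrableOn kdot (Ioc 0 T) := by
    exact hkdot.congr_set_ae Ioo_ae_eq_Ioc.symm
  have hint : ∀ a b : ℝ, 0 ≤ a → a ≤ b → b ≤ T → (∫ s in Ioc a b, kdot s) ≤ 0 := by
    intro a b ha hab hbT
    have hIab : IntegrableOn kdot (Ioc a b) :=
      hkdot'.mono_set (Ioc_subset_Ioc ha hbT)
    have hIa : IntervalIntegrable kdot volume 0 a := by
      rw [intervalIntegrable_iff_integrableOn_Ioc_of_le ha]
      exact hkdot'.mono_set (Ioc_subset_Ioc le_rfl (hab.trans hbT))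
    have hIb : IntervalIntegrable kdot volume 0 b := by
      rw [intervalIntegrable_iff_integrableOn_Ioc_of_le (ha.trans hab)]
      exact hkdot'.mono_set (Ioc_subset_Ioc le_rfl hbT)
    have heq : (∫ s in Ioc a b, kdot s) = (∫ s in (0:ℝ)..b, kdot s) - ∫ s in (0:ℝ)..a, kdot s := by
      rw [← intervalIntegral.integral_of_le hab]
      rw [← intervalIntegral.integral_interval_sub_left hIb hIa]
    have hka := hk a ⟨ha, hab.trans hbT⟩
    have hkb := hk b ⟨ha.trans hab, hbT⟩
    have := hkmono a ⟨ha, hab.trans hbT⟩ b ⟨ha.trans hab, hbT⟩ hab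
    rw [heq]; linarith
  -- the derivative of the kernel is a.e. nonpositive
  have hQ : ∀ᵐ y : ℝ, y ∈ Ioo 0 T → kdot y ≤ 0 :=
    ae_nonpos_of_setIntegral_Ioc_nonpos hkdot hint
  -- u takes values in U, globally stated
  have hPg : ∀ᵐ y : ℝ, y ∈ Ioo 0 T → u y ∈ U :=
    (ae_restrict_iff' measurableSet_Ioo).1 huU
  -- convolution integrability via extension by zero
  set ut := (Ioo 0 T).indicator u with hutdef
  set kt := (Ioo 0 T).indicator kdot with hktdef
  set Ht := (Ioo 0 T).indicator (fun y => H (u y)) with hHtdef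
  have hut : Integrable ut := (integrable_indicator_iff measurableSet_Ioo).2 hu
  have hkti : Integrable kt := (integrable_indicator_iff measurableSet_Ioo).2 hkdot
  have hHti : Integrable Ht := (integrable_indicator_iff measurableSet_Ioo).2 hHu
  have conv1 : ∀ᵐ t : ℝ, Integrable (fun s => kt s * ut (t - s)) := by
    have := hkti.ae_convolution_exists (L := ContinuousLinearMap.mul ℝ ℝ) hut
    filter_upwards [this] with t ht
    exact ht
  have conv2 : ∀ᵐ t : ℝ, Integrable (fun s => kt s * Ht (t - s)) := by
    have := hkti.ae_convolution_exists (L := ContinuousLinearMap.mul ℝ ℝ) hHti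
    filter_upwards [this] with t ht
    exact ht
  filter_upwards [huU, ae_restrict_of_ae conv1, ae_restrict_of_ae conv2,
    ae_restrict_mem measurableSet_Ioo] with t hxU hc1 hc2 ht
  set x := u t with hxdef
  have ht0 : (0:ℝ) ≤ t := ht.1.le
  have htT : t < T := ht.2
  -- measure-preserving reflection s ↦ t - s
  have mp : MeasurePreserving (fun s : ℝ => t - s) volume volume :=
    Measure.measurePreserving_sub_left volume t
  have hP' : ∀ᵐ s : ℝ, t - s ∈ Ioo 0 T → u (t - s) ∈ U := by
    rw [ae_iff] at hPg ⊢
    exact mp.quasiMeasurePreserving.preimage_null hPg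
  -- integrability on Ioo 0 t
  have hsubT : Ioo 0 t ⊆ Ioo 0 T := Ioo_subset_Ioo le_rfl htT.le
  have A2 : IntegrableOn kdot (Ioo 0 t) := hkdot.mono_set hsubT
  have hmem : ∀ s ∈ Ioo 0 t, s ∈ Ioo 0 T ∧ t - s ∈ Ioo 0 T := by
    rintro s ⟨hs1, hs2⟩
    exact ⟨⟨hs1, hs2.trans htT⟩, ⟨by linarith, by linarith⟩⟩
  have A1 : IntegrableOn (fun s => kdot s * u (t - s)) (Ioo 0 t) := by
    refine (hc1.integrableOn.mono_set (subset_univ _)).congr_fun ?_ measurableSet_Ioo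
    intro s hs
    obtain ⟨h1, h2⟩ := hmem s hs
    simp only [hktdef, hutdef, indicator_of_mem h1, indicator_of_mem h2]
  have A3 : IntegrableOn (fun s => kdot s * H (u (t - s))) (Ioo 0 t) := by
    refine (hc2.integrableOn.mono_set (subset_univ _)).congr_fun ?_ measurableSet_Ioo
    intro s hs
    obtain ⟨h1, h2⟩ := hmem s hs
    simp only [hktdef, hHtdef, indicator_of_mem h1, indicator_of_mem h2]
  -- rewrite interval integrals as set integrals over Ioo 0 t
  have hrw1 : (∫ s in (0:ℝ)..t, kdot s * (u (t - s) - u₀))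
      = ∫ s in Ioo 0 t, kdot s * (u (t - s) - u₀) := by
    rw [intervalIntegral.integral_of_le ht0, integral_Ioc_eq_integral_Ioo]
  have hrw2 : (∫ s in (0:ℝ)..t, kdot s * (H (u (t - s)) - H u₀))
      = ∫ s in Ioo 0 t, kdot s * (H (u (t - s)) - H u₀) := by
    rw [intervalIntegral.integral_of_le ht0, integral_Ioc_eq_integral_Ioo]
  rw [hrw1, hrw2, ge_iff_le, ← sub_nonneg]
  -- integrability of the combined integrands
  have hg1 : IntegrableOn (fun s => kdot s * (u (t - s) - u₀)) (Ioo 0 t) := by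
    have e : (fun s => kdot s * (u (t - s) - u₀))
        = fun s => kdot s * u (t - s) - kdot s * u₀ := by funext s; ring
    rw [e]; exact A1.sub (A2.mul_const u₀)
  have hg2 : IntegrableOn (fun s => kdot s * (H (u (t - s)) - H u₀)) (Ioo 0 t) := by
    have e : (fun s => kdot s * (H (u (t - s)) - H u₀))
        = fun s => kdot s * H (u (t - s)) - kdot s * H u₀ := by funext s; ring
    rw [e]; exact A3.sub (A2.mul_const (H u₀))
  have hcint : IntegrableOn
      (fun s => kdot s * (H' x * (u (t - s) - x) - (H (u (t - s)) - H x))) (Ioo 0 t) := by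
    have e : (fun s => kdot s * (H' x * (u (t - s) - x) - (H (u (t - s)) - H x)))
        = fun s => H' x * (kdot s * u (t - s)) - kdot s * (H' x * x - H x)
            - kdot s * H (u (t - s)) := by funext s; ring
    rw [e]; exact ((A1.const_mul (H' x)).sub (A2.mul_const (H' x * x - H x))).sub A3
  -- the integral of kdot over Ioo 0 t equals k t - k 0
  have hkint : (∫ s in Ioo 0 t, kdot s) = k t - k 0 := by
    have := hk t ⟨ht0, htT.le⟩
    rw [intervalIntegral.integral_of_le ht0, integral_Ioc_eq_integral_Ioo] at this
    linarith
  -- the key identity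
  have key : H' x * (∫ s in Ioo 0 t, kdot s * (u (t - s) - u₀))
      - (∫ s in Ioo 0 t, kdot s * (H (u (t - s)) - H u₀))
      = (∫ s in Ioo 0 t, kdot s * (H' x * (u (t - s) - x) - (H (u (t - s)) - H x)))
        + (H' x * (x - u₀) - (H x - H u₀)) * (k t - k 0) := by
    rw [← hkint, ← integral_const_mul, ← integral_sub (hg1.const_mul (H' x)) hg2,
      ← integral_const_mul, ← integral_add hcint (A2.const_mul _)]
    refine setIntegral_congr_fun measurableSet_Ioo fun s _ => ?_
    ring
  -- nonnegativity of the c-integral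
  have hcpos : 0 ≤ ∫ s in Ioo 0 t,
      kdot s * (H' x * (u (t - s) - x) - (H (u (t - s)) - H x)) := by
    refine integral_nonneg_of_ae ?_
    filter_upwards [ae_restrict_of_ae hP', ae_restrict_of_ae hQ,
      ae_restrict_mem measurableSet_Ioo] with s h1 h2 h3
    obtain ⟨hs1, hs2⟩ := hmem s h3
    have hky : kdot s ≤ 0 := h2 hs1
    have hyU : u (t - s) ∈ U := h1 hs2
    have htan := tangent_line_le' hHconvex hH hxU hyU
    have hcle : H' x * (u (t - s) - x) - (H (u (t - s)) - H x) ≤ 0 := by linarith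
    show (0:ℝ) ≤ kdot s * (H' x * (u (t - s) - x) - (H (u (t - s)) - H x))
    nlinarith [mul_nonneg (neg_nonneg.2 hky) (neg_nonneg.2 hcle)]
  have hB : 0 ≤ H' x * (x - u₀) - (H x - H u₀) := by
    have htan := tangent_line_le' hHconvex hH hxU hu₀
    have h3 : H' x * (u₀ - x) = -(H' x * (x - u₀)) := by ring
    linarith
  have hktn : 0 ≤ k t := hknonneg t ⟨ht0, htT.le⟩
  have expand : H' x * (k 0 * (x - u₀) + ∫ s in Ioo 0 t, kdot s * (u (t - s) - u₀))
      - (k 0 * (H x - H u₀) + ∫ s in Ioo 0 t, kdot s * (H (u (t - s)) - H u₀))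
      = (H' x * (∫ s in Ioo 0 t, kdot s * (u (t - s) - u₀))
          - (∫ s in Ioo 0 t, kdot s * (H (u (t - s)) - H u₀)))
        + k 0 * (H' x * (x - u₀) - (H x - H u₀)) := by ring
  rw [expand, key]
  nlinarith [mul_nonneg hB hktn]
end

section
/- Let α ∈ (0,1), T > 0, let u ∈ C¹([0,T];ℝ), and let H ∈ C¹(ℝ) be convex. Then for every t ∈ (0,T], the convexity inequality for the Caputo fractional derivative holds: H'(u(t)) · ∂_t^α(u − u(0))(t) ≥ ∂_t^α(H(u) − H(u(0)))(t), where u − u(0) denotes the function s ↦ u(s) − u(0) and H(u) − H(u(0)) denotes s ↦ H(u(s)) − H(u(0)). -/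
/-!
For `φ ∈ C¹([0,T])` the Riemann–Liouville derivative of `φ - φ(0)` is `g_{1-α} ∗ φ'`: after the
substitution `s ↦ τ - s` the convolution integrand is Lipschitz in `τ`, so one may differentiate
under the integral sign. Hence `H'(u t) ∂^α(u - u 0)(t) - ∂^α(H(u) - H(u 0))(t) = (g_{1-α} ∗ F')(t)`
with `F s = H(u t) + H'(u t) (u s - u t) - H(u s)`, which is `≤ 0` by convexity and vanishes at
`t`. Integrating by parts on `[0, t - ε]` against the nondecreasing kernel `s ↦ g_{1-α}(t - s)`
and letting `ε → 0` shows `(g_{1-α} ∗ F')(t) ≥ 0`.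
-/

open MeasureTheory Set

open Filter Topology NNReal

/-- The convolution `(k ∗ w)(t)` on `[0, ∞)`. -/
noncomputable def halfLineConv (k w : ℝ → ℝ) (t : ℝ) : ℝ :=
  ∫ s in (0:ℝ)..t, k (t - s) * w s

section HalfLineConv

variable {k w : ℝ → ℝ}

theorem halfLineConv_eq_setIntegral_Ioc (hw : ∀ y < 0, w y = 0) {τ R : ℝ} (hτ : 0 ≤ τ)
    (hτR : τ ≤ R) : halfLineConv k w τ = ∫ x in Ioc 0 R, k x * w (τ - x) := by
  have hsubst := intervalIntegral.integral_comp_sub_left (a := 0) (b := τ)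
    (fun x => k x * w (τ - x)) τ
  simp only [sub_sub_cancel, sub_self, sub_zero] at hsubst
  rw [halfLineConv, hsubst, intervalIntegral.integral_of_le hτ]
  refine (setIntegral_eq_of_subset_of_forall_sdiff_eq_zero measurableSet_Ioc
    (Ioc_subset_Ioc_right hτR) fun x hx => ?_).symm
  have hτx : τ < x := lt_of_not_ge fun h => hx.2 ⟨hx.1.1, h⟩
  rw [hw _ (sub_neg.mpr hτx), mul_zero]

theorem intervalIntegrable_halfLineConv (hk : ∀ b, IntegrableOn k (Ioc 0 b)) {t : ℝ}
    (ht : 0 ≤ t) (hw : ContinuousOn w (Icc 0 t)) :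
    IntervalIntegrable (fun s => k (t - s) * w s) volume 0 t := by
  have hk' : IntervalIntegrable k volume 0 t :=
    (intervalIntegrable_iff_integrableOn_Ioc_of_le ht).mpr (hk t)
  simpa using (hk'.comp_sub_left t).symm.mul_continuousOn (by simpa [uIcc_of_le ht] using hw)

theorem hasDerivAt_halfLineConv (hk : ∀ b, IntegrableOn k (Ioc 0 b)) {w' : ℝ → ℝ} {L : ℝ≥0}
    (hw : LipschitzWith L w) (hw_neg : ∀ y < 0, w y = 0) {t : ℝ} (ht : 0 < t)
    (hw' : ∀ y ∈ Ioo 0 t, HasDerivAt w (w' y) y) :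
    HasDerivAt (halfLineConv k w) (halfLineConv k w' t) t := by
  set μ := volume.restrict (Ioc (0:ℝ) (2 * t))
  have hkμ : Integrable k μ := hk (2 * t)
  have hball : Metric.ball t t ∈ 𝓝 t := Metric.ball_mem_nhds t ht
  have hw_deriv_neg : ∀ y < 0, HasDerivAt w 0 y := fun y hy =>
    (hasDerivAt_const y (0:ℝ)).congr_of_eventuallyEq
      (eventually_of_mem (Iio_mem_nhds hy) fun z hz => hw_neg z hz)
  have hdiff : ∀ x ∈ Ioc 0 (2 * t), x ≠ t →
      HasDerivAt (fun τ => k x * w (τ - x)) (k x * deriv w (t - x)) t := by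
    intro x hx0 hx
    have hd : DifferentiableAt ℝ w (t - x) := by
      rcases lt_or_gt_of_ne hx with hlt | hgt
      · exact (hw' _ ⟨sub_pos.mpr hlt, sub_lt_self t hx0.1⟩).differentiableAt
      · exact (hw_deriv_neg _ (sub_neg.mpr hgt)).differentiableAt
    exact (hd.hasDerivAt.comp_sub_const t x).const_mul (k x)
  obtain ⟨-, hderiv⟩ := hasDerivAt_integral_of_dominated_loc_of_lip (μ := μ)
    (F := fun τ x => k x * w (τ - x)) (F' := fun x => k x * deriv w (t - x))
    (bound := fun x => ‖k x‖ * L) hball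
    (Eventually.of_forall fun τ => hkμ.aestronglyMeasurable.mul
      (hw.continuous.comp (continuous_const.sub continuous_id)).aestronglyMeasurable)
    ((hk (2 * t)).mul_continuousOn_of_subset
      (hw.continuous.comp (continuous_const.sub continuous_id)).continuousOn
      measurableSet_Ioc isCompact_Icc Ioc_subset_Icc_self)
    (hkμ.aestronglyMeasurable.mul
      ((measurable_deriv w).comp (measurable_const.sub measurable_id)).aestronglyMeasurable)
    (Eventually.of_forall fun x => LipschitzWith.lipschitzOnWith <|
      LipschitzWith.of_dist_le_mul fun τ₁ τ₂ => by
        rw [Real.coe_nnabs, abs_of_nonneg (by positivity), dist_eq_norm, ← mul_sub, norm_mul,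
          mul_assoc, ← dist_eq_norm]
        gcongr
        simpa [Real.dist_eq] using hw.dist_le_mul (τ₁ - x) (τ₂ - x))
    (hkμ.norm.mul_const _)
    (by filter_upwards [ae_restrict_mem measurableSet_Ioc, Measure.ae_ne μ t] using hdiff)
  have hconv : ∀ τ ∈ Metric.ball t t, halfLineConv k w τ = ∫ x, k x * w (τ - x) ∂μ := by
    intro τ hτ
    rw [Metric.mem_ball, Real.dist_eq, abs_sub_lt_iff] at hτ
    exact halfLineConv_eq_setIntegral_Ioc hw_neg (by linarith) (by linarith)
  have hval : halfLineConv k w' t = ∫ x, k x * deriv w (t - x) ∂μ := by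
    rw [← halfLineConv_eq_setIntegral_Ioc (fun y hy => (hw_deriv_neg y hy).deriv) ht.le
      (by linarith), halfLineConv, halfLineConv, intervalIntegral.integral_of_le ht.le,
      intervalIntegral.integral_of_le ht.le, integral_Ioc_eq_integral_Ioo,
      integral_Ioc_eq_integral_Ioo]
    exact setIntegral_congr_fun measurableSet_Ioo fun s hs => by rw [(hw' s hs).deriv]
  rw [hval]
  exact hderiv.congr_of_eventuallyEq (eventually_of_mem hball hconv)

theorem hasDerivWithinAt_halfLineConv_sub (hk : ∀ b, IntegrableOn k (Ioc 0 b)) {φ φ' : ℝ → ℝ}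
    {T t : ℝ} (hφ : ∀ s ∈ Icc 0 T, HasDerivWithinAt φ (φ' s) (Icc 0 T) s)
    (hφ' : ContinuousOn φ' (Icc 0 T)) (ht : t ∈ Ioc 0 T) :
    HasDerivWithinAt (halfLineConv k fun s => φ s - φ 0) (halfLineConv k φ' t) (Icc 0 T) t := by
  have hT : 0 ≤ T := ht.1.le.trans ht.2
  obtain ⟨C, hC⟩ := isCompact_Icc.exists_bound_of_continuousOn hφ'
  have hφ_lip : LipschitzOnWith C.toNNReal φ (Icc 0 T) :=
    (convex_Icc 0 T).lipschitzOnWith_of_nnnorm_hasDerivWithin_le hφ fun s hs => by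
      rw [← NNReal.coe_le_coe, coe_nnnorm]
      exact (hC s hs).trans (Real.le_coe_toNNReal C)
  -- Extending `φ` by constants outside `[0, T]` keeps it Lipschitz; `w` vanishes on `(-∞, 0)`.
  set w : ℝ → ℝ := fun y => IccExtend hT ((Icc 0 T).domRestrict φ) y - φ 0
  have hw_lip : LipschitzWith (C.toNNReal * 1 + 0) w :=
    (hφ_lip.to_restrict.comp (LipschitzWith.projIcc hT)).sub (LipschitzWith.const _)
  have hw_neg : ∀ y < 0, w y = 0 := fun y hy => by
    simp [w, IccExtend_of_le_left hT _ hy.le, domRestrict_apply]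
  have hw_eq : ∀ y ∈ Icc 0 T, w y = φ y - φ 0 := fun y hy => by
    simp [w, IccExtend_of_mem hT _ hy, domRestrict_apply]
  have hw' : ∀ y ∈ Ioo 0 t, HasDerivAt w (φ' y) y := fun y hy => by
    have hyT : Icc 0 T ∈ 𝓝 y := Icc_mem_nhds hy.1 (hy.2.trans_le ht.2)
    exact (((hφ y (mem_of_mem_nhds hyT)).hasDerivAt hyT).sub_const (φ 0)).congr_of_eventuallyEq
      (eventually_of_mem hyT hw_eq)
  have hconv_eq : ∀ τ ∈ Icc 0 T, halfLineConv k (fun s => φ s - φ 0) τ = halfLineConv k w τ :=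
    fun τ hτ => intervalIntegral.integral_congr fun s hs => by
      rw [uIcc_of_le hτ.1] at hs
      simp only [hw_eq s ⟨hs.1, hs.2.trans hτ.2⟩]
  exact (hasDerivAt_halfLineConv hk hw_lip hw_neg ht.1 hw').hasDerivWithinAt.congr hconv_eq
    (hconv_eq t ⟨ht.1.le, ht.2⟩)

theorem halfLineConv_const_mul_sub {a b : ℝ → ℝ} {t : ℝ}
    (ha : IntervalIntegrable (fun s => k (t - s) * a s) volume 0 t)
    (hb : IntervalIntegrable (fun s => k (t - s) * b s) volume 0 t) (c : ℝ) :
    halfLineConv k (fun s => c * a s - b s) t = c * halfLineConv k a t - halfLineConv k b t := by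
  rw [halfLineConv, halfLineConv, halfLineConv, ← intervalIntegral.integral_const_mul,
    ← intervalIntegral.integral_sub (ha.const_mul c) hb]
  congr 1 with s
  ring

end HalfLineConv

section StdKernel

variable {β : ℝ}

theorem stdKernel_nonneg (hβ : 0 < β) {x : ℝ} (hx : 0 ≤ x) : 0 ≤ stdKernel β x :=
  div_nonneg (Real.rpow_nonneg hx _) (Real.Gamma_pos_of_pos hβ).le

theorem integrableOn_stdKernel (hβ : 0 < β) (b : ℝ) : IntegrableOn (stdKernel β) (Ioc 0 b) :=
  ((intervalIntegral.intervalIntegrable_rpow' (by linarith)).div_const _).1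

theorem stdKernel_mul_self {x : ℝ} (hx : 0 < x) : stdKernel β x * x = x ^ β / Real.Gamma β := by
  rw [stdKernel, div_mul_eq_mul_div, ← Real.rpow_add_one hx.ne', sub_add_cancel]

theorem hasDerivAt_stdKernel {x : ℝ} (hx : 0 < x) :
    HasDerivAt (stdKernel β) ((β - 1) * x ^ (β - 2) / Real.Gamma β) x := by
  rw [show β - 2 = β - 1 - 1 by ring]
  exact (Real.hasDerivAt_rpow_const (Or.inl hx.ne')).div_const (Real.Gamma β)

/-- Integration by parts on `[0, b]`: since `β ≤ 1` the kernel `s ↦ g_β(t - s)` is nondecreasing,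
so for `F ≤ 0` both the interior term and the boundary term at `0` have the right sign. -/
theorem stdKernel_mul_le_integral (hβ0 : 0 < β) (hβ1 : β ≤ 1) {F F' : ℝ → ℝ} {b t : ℝ}
    (hb : 0 ≤ b) (hbt : b < t) (hF : ∀ s ∈ Icc 0 b, HasDerivWithinAt F (F' s) (Icc 0 b) s)
    (hF' : IntervalIntegrable F' volume 0 b) (hF_nonpos : ∀ s ∈ Icc 0 b, F s ≤ 0) :
    stdKernel β (t - b) * F b ≤ ∫ s in (0:ℝ)..b, stdKernel β (t - s) * F' s := by
  set K' : ℝ → ℝ := fun s => -((β - 1) * (t - s) ^ (β - 2) / Real.Gamma β)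
  have hK : ∀ s ∈ uIcc 0 b, HasDerivWithinAt (fun s => stdKernel β (t - s)) (K' s) (uIcc 0 b) s :=
    fun s hs => by
      rw [uIcc_of_le hb] at hs
      exact ((hasDerivAt_stdKernel (by linarith [hs.2])).comp_const_sub t s).hasDerivWithinAt
  have hK'_cont : ContinuousOn K' (uIcc 0 b) := by
    refine (continuousOn_const.mul (ContinuousOn.rpow_const (by fun_prop) fun s hs => ?_)
      |>.div_const _).neg
    rw [uIcc_of_le hb] at hs
    exact Or.inl (by linarith [hs.2])
  have hK'_nonneg : ∀ s ∈ Icc 0 b, 0 ≤ K' s := fun s hs => by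
    have := div_nonneg (Real.rpow_nonneg (by linarith [hs.2] : 0 ≤ t - s) (β - 2))
      (Real.Gamma_pos_of_pos hβ0).le
    simp only [K', mul_div_assoc]
    nlinarith
  have hibp := intervalIntegral.integral_mul_deriv_eq_deriv_mul_of_hasDerivWithinAt hK
    (by rwa [uIcc_of_le hb]) hK'_cont.intervalIntegrable hF'
  have hboundary : stdKernel β (t - 0) * F 0 ≤ 0 :=
    mul_nonpos_of_nonneg_of_nonpos (stdKernel_nonneg hβ0 (by linarith))
      (hF_nonpos 0 ⟨le_rfl, hb⟩)
  have hinterior : 0 ≤ ∫ s in (0:ℝ)..b, -(K' s * F s) :=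
    intervalIntegral.integral_nonneg hb fun s hs =>
      neg_nonneg.mpr (mul_nonpos_of_nonneg_of_nonpos (hK'_nonneg s hs) (hF_nonpos s hs))
  rw [intervalIntegral.integral_neg] at hinterior
  linarith

theorem tendsto_stdKernel_mul_sub_nhdsGT (hβ : 0 < β) {F : ℝ → ℝ} {M : ℝ≥0} {t : ℝ} (ht : 0 < t)
    (hF : LipschitzOnWith M F (Icc 0 t)) (hFt : F t = 0) :
    Tendsto (fun ε => stdKernel β ε * F (t - ε)) (𝓝[>] 0) (𝓝 0) := by
  have hpow : Tendsto (fun ε : ℝ => M * (ε ^ β / Real.Gamma β)) (𝓝[>] 0) (𝓝 0) := by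
    have h := (Real.continuousAt_rpow_const 0 β (Or.inr hβ.le)).tendsto
    rw [Real.zero_rpow hβ.ne'] at h
    simpa using ((h.div_const (Real.Gamma β)).const_mul (M : ℝ)).mono_left nhdsWithin_le_nhds
  refine squeeze_zero_norm' ?_ hpow
  filter_upwards [Ioo_mem_nhdsGT ht] with ε hε
  have hFε : |F (t - ε)| ≤ M * ε := by
    simpa [hFt, Real.dist_eq, abs_of_pos hε.1] using
      hF.dist_le_mul (t - ε) ⟨by linarith [hε.2], by linarith [hε.1]⟩ t ⟨ht.le, le_rfl⟩
  rw [norm_mul, Real.norm_of_nonneg (stdKernel_nonneg hβ hε.1.le), Real.norm_eq_abs,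
    ← stdKernel_mul_self hε.1]
  nlinarith [stdKernel_nonneg hβ hε.1.le]

/-- `(g_β ∗ F')(t)` is the limit of the integrals over `[0, t - ε]`, each of
which is at least the boundary term `g_β(ε) F(t - ε) = O(ε^β)`. -/
theorem halfLineConv_stdKernel_nonneg (hβ0 : 0 < β) (hβ1 : β ≤ 1) {F F' : ℝ → ℝ} {t : ℝ}
    (ht : 0 < t) (hF : ∀ s ∈ Icc 0 t, HasDerivWithinAt F (F' s) (Icc 0 t) s)
    (hF' : ContinuousOn F' (Icc 0 t)) (hF_nonpos : ∀ s ∈ Icc 0 t, F s ≤ 0) (hFt : F t = 0) :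
    0 ≤ halfLineConv (stdKernel β) F' t := by
  obtain ⟨C, hC⟩ := isCompact_Icc.exists_bound_of_continuousOn hF'
  have hF_lip : LipschitzOnWith C.toNNReal F (Icc 0 t) :=
    (convex_Icc 0 t).lipschitzOnWith_of_nnnorm_hasDerivWithin_le hF fun s hs => by
      rw [← NNReal.coe_le_coe, coe_nnnorm]
      exact (hC s hs).trans (Real.le_coe_toNNReal C)
  have hint := intervalIntegrable_halfLineConv (integrableOn_stdKernel hβ0) ht.le hF'
  have hprimitive : Tendsto (fun ε => ∫ s in (0:ℝ)..t - ε, stdKernel β (t - s) * F' s) (𝓝[>] 0)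
      (𝓝 (halfLineConv (stdKernel β) F' t)) := by
    refine ((intervalIntegral.continuousOn_primitive_interval' hint left_mem_uIcc) t
      right_mem_uIcc).tendsto.comp (tendsto_nhdsWithin_iff.mpr ⟨?_, ?_⟩)
    · exact ((continuous_const.sub continuous_id).tendsto' 0 t (sub_zero t)).mono_left
        nhdsWithin_le_nhds
    · filter_upwards [Ioo_mem_nhdsGT ht] with ε hε
      rw [uIcc_of_le ht.le]
      exact ⟨by linarith [hε.2], by linarith [hε.1]⟩
  refine le_of_tendsto_of_tendsto (tendsto_stdKernel_mul_sub_nhdsGT hβ0 ht hF_lip hFt)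
    hprimitive ?_
  filter_upwards [Ioo_mem_nhdsGT ht] with ε hε
  have hsub : Icc 0 (t - ε) ⊆ Icc 0 t := Icc_subset_Icc_right (by linarith [hε.1])
  simpa using stdKernel_mul_le_integral (t := t) hβ0 hβ1 (by linarith [hε.2]) (by linarith [hε.1])
    (fun s hs => (hF s (hsub hs)).mono hsub)
    ((hF'.mono hsub).intervalIntegrable_of_Icc (by linarith [hε.2]))
    (fun s hs => hF_nonpos s (hsub hs))

end StdKernel

theorem ConvexOn.add_deriv_mul_sub_le {S : Set ℝ} {f : ℝ → ℝ} {f' x y : ℝ}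
    (hf : ConvexOn ℝ S f) (hx : x ∈ S) (hy : y ∈ S) (hf' : HasDerivAt f f' x) :
    f x + f' * (y - x) ≤ f y := by
  rcases lt_trichotomy x y with hxy | rfl | hyx
  · have h := hf.le_slope_of_hasDerivAt hx hy hxy hf'
    rw [slope_def_field, le_div_iff₀ (sub_pos.mpr hxy)] at h
    linarith
  · simp
  · have h := hf.slope_le_of_hasDerivAt hy hx hyx hf'
    rw [slope_def_field, div_le_iff₀ (sub_pos.mpr hyx)] at h
    linarith

theorem caputo_convexity_inequality_general
    (α T : ℝ) (hα : α ∈ Ioo (0:ℝ) 1)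
    (u u' : ℝ → ℝ)
    (hu : ∀ t ∈ Icc 0 T, HasDerivWithinAt u (u' t) (Icc 0 T) t)
    (hu'cont : ContinuousOn u' (Icc 0 T))
    (H H' : ℝ → ℝ)
    (hH : ∀ x : ℝ, HasDerivAt H (H' x) x)
    (hH'cont : Continuous H')
    (hHconvex : ConvexOn ℝ univ H) :
    ∀ t ∈ Ioc 0 T, ∃ Du DH : ℝ,
      HasDerivWithinAt (fun τ => ∫ s in (0:ℝ)..τ, stdKernel (1 - α) (τ - s) * (u s - u 0))
        Du (Icc 0 T) t ∧
      HasDerivWithinAt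
        (fun τ => ∫ s in (0:ℝ)..τ, stdKernel (1 - α) (τ - s) * (H (u s) - H (u 0)))
        DH (Icc 0 T) t ∧
      H' (u t) * Du ≥ DH := by
  intro t ht
  have hβ : 0 < 1 - α := by linarith [hα.2]
  have hk := integrableOn_stdKernel hβ
  have hHu : ∀ s ∈ Icc 0 T, HasDerivWithinAt (fun s => H (u s)) (H' (u s) * u' s) (Icc 0 T) s :=
    fun s hs => (hH (u s)).comp_hasDerivWithinAt s (hu s hs)
  have hHu'_cont : ContinuousOn (fun s => H' (u s) * u' s) (Icc 0 T) :=
    (hH'cont.comp_continuousOn fun s hs => (hu s hs).continuousWithinAt).mul hu'cont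
  refine ⟨_, _, hasDerivWithinAt_halfLineConv_sub hk hu hu'cont ht,
    hasDerivWithinAt_halfLineConv_sub hk hHu hHu'_cont ht, ?_⟩
  have hsub : Icc 0 t ⊆ Icc 0 T := Icc_subset_Icc_right ht.2
  -- The gap between `H ∘ u` and its tangent line at `u t`: nonpositive by convexity, zero at `t`.
  have hgap : ∀ s ∈ Icc 0 t, HasDerivWithinAt (fun s => H (u t) + H' (u t) * (u s - u t) - H (u s))
      (H' (u t) * u' s - H' (u s) * u' s) (Icc 0 t) s := fun s hs =>
    ((((hu s (hsub hs)).sub_const (u t)).const_mul (H' (u t))).const_add (H (u t)) |>.sub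
      (hHu s (hsub hs))).mono hsub
  have hpos := halfLineConv_stdKernel_nonneg hβ (by linarith [hα.1]) ht.1 hgap
    ((continuousOn_const.mul hu'cont).sub hHu'_cont |>.mono hsub)
    (fun s _ => by
      linarith [hHconvex.add_deriv_mul_sub_le (mem_univ _) (mem_univ (u s)) (hH (u t))])
    (by ring)
  rw [halfLineConv_const_mul_sub (intervalIntegrable_halfLineConv hk ht.1.le (hu'cont.mono hsub))
    (intervalIntegrable_halfLineConv hk ht.1.le (hHu'_cont.mono hsub))] at hpos
  exact sub_nonneg.mp hpos

/-- **Convexity inequality for the Caputo fractional derivative**: for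
`u ∈ C¹([0,T];ℝ)` and convex `H ∈ C¹(ℝ)`, for every `t ∈ (0,T]` the
Riemann-Liouville derivatives `∂ₜᵅ(u - u(0))(t)` and `∂ₜᵅ(H(u) - H(u(0)))(t)`
exist (as derivatives of `g_{1-α} ∗ (u - u(0))` and `g_{1-α} ∗ (H(u) - H(u(0)))`
within `[0,T]`) and satisfy `H'(u(t)) ∂ₜᵅ(u - u(0))(t) ≥ ∂ₜᵅ(H(u) - H(u(0)))(t)`. -/
theorem caputo_convexity_inequality
    (α T : ℝ) (hα : α ∈ Ioo (0:ℝ) 1) (hT : 0 < T)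
    (u u' : ℝ → ℝ)
    (hu : ∀ t ∈ Icc 0 T, HasDerivWithinAt u (u' t) (Icc 0 T) t)
    (hu'cont : ContinuousOn u' (Icc 0 T))
    (H H' : ℝ → ℝ)
    (hH : ∀ x : ℝ, HasDerivAt H (H' x) x)
    (hH'cont : Continuous H')
    (hHconvex : ConvexOn ℝ univ H) :
    ∀ t ∈ Ioc 0 T, ∃ Du DH : ℝ,
      HasDerivWithinAt (fun τ => ∫ s in (0:ℝ)..τ, stdKernel (1 - α) (τ - s) * (u s - u 0))
        Du (Icc 0 T) t ∧
      HasDerivWithinAt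
        (fun τ => ∫ s in (0:ℝ)..τ, stdKernel (1 - α) (τ - s) * (H (u s) - H (u 0)))
        DH (Icc 0 T) t ∧
      H' (u t) * Du ≥ DH :=
  caputo_convexity_inequality_general α T hα u u' hu hu'cont H H' hH hH'cont hHconvex
end

section
/- Let T > 0 and let Ω ⊂ ℝ^d be an open set. Let k be nonnegative, nonincreasing, and absolutely continuous on [0,T] with derivative k̇ ∈ L₁(0,T). Then for any v ∈ L₂((0,T)×Ω) and any v₀ ∈ L₂(Ω), for almost every t ∈ (0,T) one has the L₂-norm inequality ∫_Ω v(t,x) · ∂_t(k ∗ [v(·,x) − v₀(x)])(t) dx ≥ ‖v(t,·)‖_{L₂(Ω)} · ∂_t(k ∗ [‖v(·,·)‖_{L₂(Ω)} − ‖v₀‖_{L₂(Ω)}])(t), where on the right-hand side k is convolved with the scalar function t ↦ ‖v(t,·)‖_{L₂(Ω)} − ‖v₀‖_{L₂(Ω)}. -/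
/-!
Fubini turns the left side into
`k(0) (‖v(t)‖² - ⟨v(t), v₀⟩) + ∫₀ᵗ k̇(s) (⟨v(t), v(t-s)⟩ - ⟨v(t), v₀⟩) ds`.
Since `k` is nonincreasing, `k̇ ≤ 0` a.e. (Lebesgue differentiation), so Cauchy–Schwarz
`⟨v(t), v(t-s)⟩ ≤ ‖v(t)‖ ‖v(t-s)‖` can be applied under the memory integral. The two
`v₀`-terms add up to `-k(t) ⟨v(t), v₀⟩` with `k(t) ≥ 0`, where Cauchy–Schwarz applies again.
Fubini is legitimate for a.e. `t` because the convolution `|k̇| ∗ ‖v(·)‖` is integrable.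
-/

open MeasureTheory Set

variable {X : Type*} [MeasurableSpace X] {μ : Measure X}

noncomputable def l2Norm (μ : Measure X) (f : X → ℝ) : ℝ := √(∫ x, f x ^ 2 ∂μ)

lemma l2Norm_nonneg (f : X → ℝ) : 0 ≤ l2Norm μ f := Real.sqrt_nonneg _

lemma l2Norm_mul_self (f : X → ℝ) : l2Norm μ f * l2Norm μ f = ∫ x, f x ^ 2 ∂μ :=
  Real.mul_self_sqrt (integral_nonneg fun _ => sq_nonneg _)

lemma l2Norm_abs (f : X → ℝ) : l2Norm μ (fun x => |f x|) = l2Norm μ f := by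
  simp only [l2Norm, sq_abs]

lemma MeasureTheory.MemLp.integrable_fun_mul {f g : X → ℝ} (hf : MemLp f 2 μ) (hg : MemLp g 2 μ) :
    Integrable (fun x => f x * g x) μ :=
  hf.integrable_mul hg

lemma integral_mul_le_l2Norm_mul {f g : X → ℝ} (hf : MemLp f 2 μ) (hg : MemLp g 2 μ) :
    ∫ x, f x * g x ∂μ ≤ l2Norm μ f * l2Norm μ g := by
  have h := integral_mul_le_Lp_mul_Lq_of_nonneg (μ := μ) Real.HolderConjugate.two_two
    (ae_of_all _ fun x => abs_nonneg (f x)) (ae_of_all _ fun x => abs_nonneg (g x))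
    (by rw [ENNReal.ofReal_ofNat]; exact hf.abs) (by rw [ENNReal.ofReal_ofNat]; exact hg.abs)
  simp only [Real.rpow_two, sq_abs] at h
  calc ∫ x, f x * g x ∂μ ≤ ∫ x, |f x| * |g x| ∂μ :=
        integral_mono (hf.integrable_fun_mul hg) (hf.abs.integrable_fun_mul hg.abs)
          fun x => (le_abs_self _).trans (abs_mul _ _).le
    _ ≤ l2Norm μ f * l2Norm μ g := by simpa only [l2Norm, Real.sqrt_eq_rpow] using h

lemma integral_abs_mul_le_l2Norm_mul {f g : X → ℝ} (hf : MemLp f 2 μ) (hg : MemLp g 2 μ) :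
    ∫ x, |f x * g x| ∂μ ≤ l2Norm μ f * l2Norm μ g := by
  have h := integral_mul_le_l2Norm_mul (f := fun x => |f x|) (g := fun x => |g x|) hf.abs hg.abs
  simpa only [abs_mul, l2Norm_abs] using h

lemma integral_abs_mul_sub_le {u w u₀ : X → ℝ} (hu : MemLp u 2 μ) (hw : MemLp w 2 μ)
    (hu₀ : MemLp u₀ 2 μ) :
    ∫ x, |u x * (w x - u₀ x)| ∂μ ≤ l2Norm μ u * (l2Norm μ w + l2Norm μ u₀) := by
  have huw : Integrable (fun x => |u x * w x|) μ := (hu.integrable_fun_mul hw).abs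
  have huu₀ : Integrable (fun x => |u x * u₀ x|) μ := (hu.integrable_fun_mul hu₀).abs
  calc ∫ x, |u x * (w x - u₀ x)| ∂μ ≤ ∫ x, (|u x * w x| + |u x * u₀ x|) ∂μ := by
        refine integral_mono (hu.integrable_fun_mul (hw.sub hu₀)).abs (huw.add huu₀) fun x => ?_
        simpa only [mul_sub] using abs_sub _ _
    _ ≤ l2Norm μ u * l2Norm μ w + l2Norm μ u * l2Norm μ u₀ := by
        rw [integral_add huw huu₀]
        exact add_le_add (integral_abs_mul_le_l2Norm_mul hu hw)
          (integral_abs_mul_le_l2Norm_mul hu hu₀)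
    _ = l2Norm μ u * (l2Norm μ w + l2Norm μ u₀) := by ring

section KernelTerm

variable {S : Type*} [MeasurableSpace S] {ν : Measure S} [SFinite μ]
  {a : S → ℝ} {w : S → X → ℝ} {u u₀ : X → ℝ}

lemma integrable_prod_mul_mul_sub (hu : MemLp u 2 μ) (hu₀ : MemLp u₀ 2 μ)
    (hw : ∀ᵐ s ∂ν, MemLp (w s) 2 μ) (hwm : AEStronglyMeasurable (Function.uncurry w) (ν.prod μ))
    (ha : Integrable a ν) (haw : Integrable (fun s => a s * l2Norm μ (w s)) ν) :
    Integrable (fun p : S × X => a p.1 * (u p.2 * (w p.1 p.2 - u₀ p.2))) (ν.prod μ) := by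
  have hm : AEStronglyMeasurable (fun p : S × X => a p.1 * (u p.2 * (w p.1 p.2 - u₀ p.2)))
      (ν.prod μ) :=
    ha.1.comp_fst.mul (hu.1.comp_snd.mul (hwm.sub hu₀.1.comp_snd))
  refine (integrable_prod_iff hm).2 ⟨?_, ?_⟩
  · filter_upwards [hw] with s hs
    exact (hu.integrable_fun_mul (hs.sub hu₀)).const_mul (a s)
  · refine ((haw.norm.add (ha.norm.mul_const (l2Norm μ u₀))).const_mul (l2Norm μ u)).mono'
      hm.norm.integral_prod_right' ?_
    filter_upwards [hw] with s hs
    simp only [norm_mul, Real.norm_eq_abs, abs_of_nonneg (l2Norm_nonneg _)]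
    rw [abs_of_nonneg (integral_nonneg fun _ => by positivity), integral_const_mul]
    calc |a s| * ∫ x, |u x| * |w s x - u₀ x| ∂μ
        ≤ |a s| * (l2Norm μ u * (l2Norm μ (w s) + l2Norm μ u₀)) := by
          gcongr
          simpa only [abs_mul] using integral_abs_mul_sub_le hu hs hu₀
      _ = l2Norm μ u * (|a s| * l2Norm μ (w s) + |a s| * l2Norm μ u₀) := by ring

lemma integral_mul_integral_mul_sub_comm [SFinite ν] (hu : MemLp u 2 μ) (hu₀ : MemLp u₀ 2 μ)
    (hw : ∀ᵐ s ∂ν, MemLp (w s) 2 μ) (hwm : AEStronglyMeasurable (Function.uncurry w) (ν.prod μ))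
    (ha : Integrable a ν) (haw : Integrable (fun s => a s * l2Norm μ (w s)) ν) :
    ∫ x, u x * ∫ s, a s * (w s x - u₀ x) ∂ν ∂μ
      = ∫ s, a s * ∫ x, u x * (w s x - u₀ x) ∂μ ∂ν := by
  have h := integral_integral_swap (f := fun s x => a s * (u x * (w s x - u₀ x)))
    (integrable_prod_mul_mul_sub hu hu₀ hw hwm ha haw)
  simp only [integral_const_mul] at h
  rw [h]
  simp only [← integral_const_mul, mul_left_comm (u _)]

/-- The inequality at a fixed time `t`, with `ν = dt` on `(0, t)`, `a = k̇`, `c = k(0)`,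
`w s = v(t - s)`, so that `c + ∫ a = k(t)`. -/
theorem l2Norm_mul_le_integral_of_kernel_nonpos [SFinite ν] {c : ℝ} (hu : MemLp u 2 μ)
    (hu₀ : MemLp u₀ 2 μ)
    (hw : ∀ᵐ s ∂ν, MemLp (w s) 2 μ) (hwm : AEStronglyMeasurable (Function.uncurry w) (ν.prod μ))
    (ha : Integrable a ν) (ha_nonpos : ∀ᵐ s ∂ν, a s ≤ 0)
    (haw : Integrable (fun s => a s * l2Norm μ (w s)) ν) (hc : 0 ≤ c + ∫ s, a s ∂ν) :
    l2Norm μ u * (c * (l2Norm μ u - l2Norm μ u₀)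
        + ∫ s, a s * (l2Norm μ (w s) - l2Norm μ u₀) ∂ν)
      ≤ ∫ x, u x * (c * (u x - u₀ x) + ∫ s, a s * (w s x - u₀ x) ∂ν) ∂μ := by
  set N := l2Norm μ u
  set B := ∫ x, u x * u₀ x ∂μ
  have hF := integrable_prod_mul_mul_sub hu hu₀ hw hwm ha haw
  have hB : B ≤ N * l2Norm μ u₀ := integral_mul_le_l2Norm_mul hu hu₀
  have hlocal : ∫ x, u x * (u x - u₀ x) ∂μ = N * N - B := by
    rw [l2Norm_mul_self, ← integral_sub hu.integrable_sq (hu.integrable_fun_mul hu₀)]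
    congr with x
    ring
  have hmemory : N * ∫ s, a s * l2Norm μ (w s) ∂ν - (∫ s, a s ∂ν) * B
      ≤ ∫ s, a s * ∫ x, u x * (w s x - u₀ x) ∂μ ∂ν := by
    rw [← integral_const_mul, ← integral_mul_const,
      ← integral_sub (haw.const_mul N) (ha.mul_const B)]
    refine integral_mono_ae ((haw.const_mul N).sub (ha.mul_const B)) ?_ ?_
    · simpa only [integral_const_mul] using hF.integral_prod_left
    · filter_upwards [hw, ha_nonpos] with s hs has
      have hCS : ∫ x, u x * w s x ∂μ ≤ N * l2Norm μ (w s) := integral_mul_le_l2Norm_mul hu hs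
      simp only [mul_sub]
      rw [integral_sub (hu.integrable_fun_mul hs) (hu.integrable_fun_mul hu₀)]
      nlinarith
  have hrhs : ∫ x, u x * (c * (u x - u₀ x) + ∫ s, a s * (w s x - u₀ x) ∂ν) ∂μ
      = c * (N * N - B) + ∫ s, a s * ∫ x, u x * (w s x - u₀ x) ∂μ ∂ν := by
    have hmem : Integrable (fun x => u x * ∫ s, a s * (w s x - u₀ x) ∂ν) μ := by
      simpa only [integral_const_mul, mul_left_comm (a _)] using hF.integral_prod_right
    simp only [mul_add, mul_left_comm (u _) c]
    have hlocal_int : Integrable (fun x => u x * (u x - u₀ x)) μ :=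
      hu.integrable_fun_mul (hu.sub hu₀)
    rw [integral_add (hlocal_int.const_mul c) hmem, integral_const_mul,
      hlocal, integral_mul_integral_mul_sub_comm hu hu₀ hw hwm ha haw]
  have hlhs : ∫ s, a s * (l2Norm μ (w s) - l2Norm μ u₀) ∂ν
      = ∫ s, a s * l2Norm μ (w s) ∂ν - (∫ s, a s ∂ν) * l2Norm μ u₀ := by
    rw [← integral_mul_const, ← integral_sub haw (ha.mul_const _)]
    congr with s
    ring
  rw [hrhs, hlhs]
  linarith [mul_le_mul_of_nonneg_left hB hc]

end KernelTerm

section Slices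

variable {S : Type*} [MeasurableSpace S] {ν : Measure S} [SFinite μ] {v : S → X → ℝ}

lemma MeasureTheory.MemLp.ae_memLp_slice [SFinite ν]
    (hv : MemLp (Function.uncurry v) 2 (ν.prod μ)) :
    ∀ᵐ t ∂ν, MemLp (v t) 2 μ := by
  filter_upwards [hv.integrable_sq.prod_right_ae, hv.1.prodMk_left] with t hsq hm
  exact (memLp_two_iff_integrable_sq hm).2 hsq

lemma MeasureTheory.MemLp.memLp_l2Norm_slice (hv : MemLp (Function.uncurry v) 2 (ν.prod μ)) :
    MemLp (fun t => l2Norm μ (v t)) 2 ν := by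
  have hm : AEStronglyMeasurable (fun t => l2Norm μ (v t)) ν :=
    Real.continuous_sqrt.comp_aestronglyMeasurable hv.integrable_sq.1.integral_prod_right'
  refine (memLp_two_iff_integrable_sq hm).2 ?_
  simpa only [sq, l2Norm_mul_self, Function.uncurry_apply_pair] using
    hv.integrable_sq.integral_prod_left

end Slices

lemma ae_nonpos_of_antitoneOn_integral {f : ℝ → ℝ} {a b : ℝ} (hf : IntegrableOn f (Ioo a b))
    (hmono : AntitoneOn (fun x => ∫ t in a..x, f t) (Icc a b)) :
    ∀ᵐ x ∂volume.restrict (Ioo a b), f x ≤ 0 := by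
  rcases lt_or_ge b a with hba | hab
  · simp [Ioo_eq_empty_of_le hba.le]
  have hf' : IntervalIntegrable f volume a b :=
    (intervalIntegrable_iff_integrableOn_Ioo_of_le hab).2 hf
  filter_upwards [ae_restrict_of_ae hf'.ae_hasDerivAt_integral, ae_restrict_mem measurableSet_Ioo]
    with x hderiv hx
  have hxI : x ∈ uIcc a b := Icc_subset_uIcc (Ioo_subset_Icc_self hx)
  have hacc : AccPt x (Filter.principal (Ioo a b)) := by
    simpa using (PerfectSpace.univ_preperfect x (mem_univ x)).nhds_inter (Ioo_mem_nhds hx.1 hx.2)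
  exact (hderiv hxI a left_mem_uIcc).hasDerivWithinAt.nonpos_of_antitoneOn hacc
    (hmono.mono Ioo_subset_Icc_self)

lemma ae_integrableOn_mul_comp_sub {f g : ℝ → ℝ} {T : ℝ} (hf : IntegrableOn f (Ioo 0 T))
    (hg : IntegrableOn g (Ioo 0 T)) :
    ∀ᵐ t ∂volume.restrict (Ioo 0 T), IntegrableOn (fun s => f s * g (t - s)) (Ioo 0 t) := by
  have hf' : Integrable ((Ioo 0 T).indicator f) := (integrable_indicator_iff measurableSet_Ioo).2 hf
  have hg' : Integrable ((Ioo 0 T).indicator g) := (integrable_indicator_iff measurableSet_Ioo).2 hg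
  filter_upwards [ae_restrict_of_ae
      (hf'.convolution_integrand (ContinuousLinearMap.mul ℝ ℝ) hg').prod_right_ae,
    ae_restrict_mem measurableSet_Ioo] with t ht htT
  refine ht.integrableOn.congr_fun (fun s hs => ?_) measurableSet_Ioo
  have hs' : s ∈ Ioo 0 T := ⟨hs.1, hs.2.trans htT.2⟩
  have hts : t - s ∈ Ioo 0 T := ⟨by linarith [hs.2], by linarith [hs.1, htT.2]⟩
  simp [indicator_of_mem hs', indicator_of_mem hts]

lemma measurePreserving_sub_left_restrict_Ioo (t : ℝ) :
    MeasurePreserving (fun s => t - s) (volume.restrict (Ioo 0 t)) (volume.restrict (Ioo 0 t)) := by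
  have h := (Measure.measurePreserving_sub_left volume t).restrict_preimage (s := Ioo 0 t)
    measurableSet_Ioo
  have hpre : (fun s : ℝ => t - s) ⁻¹' Ioo 0 t = Ioo 0 t := by
    ext s
    simp only [mem_preimage, mem_Ioo]
    constructor <;> rintro ⟨h1, h2⟩ <;> constructor <;> linarith
  rwa [hpre] at h

lemma ae_restrict_Ioo_comp_sub {P : ℝ → Prop} {t T : ℝ} (h : ∀ᵐ τ ∂volume.restrict (Ioo 0 T), P τ)
    (ht : t ≤ T) : ∀ᵐ s ∂volume.restrict (Ioo 0 t), P (t - s) :=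
  (measurePreserving_sub_left_restrict_Ioo t).quasiMeasurePreserving.ae
    (ae_restrict_of_ae_restrict_of_subset (Ioo_subset_Ioo_right ht) h)

lemma MeasureTheory.AEStronglyMeasurable.comp_sub_left_prod {Y : Type*} [TopologicalSpace Y]
    {F : ℝ × X → Y} [SFinite μ] {t T : ℝ} (hF : AEStronglyMeasurable F ((volume.restrict (Ioo 0 T)).prod μ))
    (ht : t ≤ T) :
    AEStronglyMeasurable (fun p : ℝ × X => F (t - p.1, p.2))
      ((volume.restrict (Ioo 0 t)).prod μ) := by
  have hmono : (volume.restrict (Ioo 0 t)).prod μ ≤ (volume.restrict (Ioo 0 T)).prod μ :=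
    Measure.prod_mono (Measure.restrict_mono (Ioo_subset_Ioo_right ht) le_rfl) le_rfl
  exact (hF.mono_measure hmono).comp_measurePreserving
    ((measurePreserving_sub_left_restrict_Ioo t).prod (MeasurePreserving.id μ))

theorem L2_norm_inequality_general
    (d : ℕ) (T : ℝ)
    (Ω : Set (EuclideanSpace ℝ (Fin d)))
    (k kdot : ℝ → ℝ)
    (hkdot : IntegrableOn kdot (Ioo 0 T))
    (hk : ∀ t ∈ Icc 0 T, k t = k 0 + ∫ s in (0:ℝ)..t, kdot s)
    (hknonneg : ∀ t ∈ Icc 0 T, 0 ≤ k t)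
    (hkmono : ∀ s ∈ Icc 0 T, ∀ t ∈ Icc 0 T, s ≤ t → k t ≤ k s)
    (v : ℝ → EuclideanSpace ℝ (Fin d) → ℝ)
    (hv : MemLp (fun p : ℝ × EuclideanSpace ℝ (Fin d) => v p.1 p.2) 2
      ((volume.restrict (Ioo 0 T)).prod (volume.restrict Ω)))
    (v₀ : EuclideanSpace ℝ (Fin d) → ℝ)
    (hv₀ : MemLp v₀ 2 (volume.restrict Ω))
    (N : ℝ → ℝ) (hN : ∀ t, N t = (∫ x in Ω, (v t x) ^ 2) ^ (1/2 : ℝ))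
    (N₀ : ℝ) (hN₀ : N₀ = (∫ x in Ω, (v₀ x) ^ 2) ^ (1/2 : ℝ)) :
    ∀ᵐ t ∂(volume.restrict (Ioo 0 T)),
      ∫ x in Ω, v t x *
          (k 0 * (v t x - v₀ x) + ∫ s in (0:ℝ)..t, kdot s * (v (t - s) x - v₀ x))
        ≥ N t * (k 0 * (N t - N₀) + ∫ s in (0:ℝ)..t, kdot s * (N (t - s) - N₀)) := by
  obtain rfl : N = fun t => l2Norm (volume.restrict Ω) (v t) :=
    funext fun t => by rw [hN, l2Norm, Real.sqrt_eq_rpow]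
  obtain rfl : N₀ = l2Norm (volume.restrict Ω) v₀ := by rw [hN₀, l2Norm, Real.sqrt_eq_rpow]
  have hkdot_nonpos : ∀ᵐ s ∂volume.restrict (Ioo 0 T), kdot s ≤ 0 := by
    refine ae_nonpos_of_antitoneOn_integral hkdot fun s hs t ht hst => ?_
    have := hkmono s hs t ht hst
    rw [hk s hs, hk t ht] at this
    simpa using this
  have hslice := hv.ae_memLp_slice (v := v)
  filter_upwards [hslice, ae_integrableOn_mul_comp_sub hkdot
      ((hv.memLp_l2Norm_slice (v := v)).integrable one_le_two),
    ae_restrict_mem measurableSet_Ioo] with t hvt hconv ht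
  have hIoo : ∀ f : ℝ → ℝ, ∫ s in (0:ℝ)..t, f s = ∫ s in Ioo 0 t, f s := fun f => by
    rw [intervalIntegral.integral_of_le ht.1.le, integral_Ioc_eq_integral_Ioo]
  have hkt : 0 ≤ k 0 + ∫ s in Ioo 0 t, kdot s := by
    rw [← hIoo, ← hk t ⟨ht.1.le, ht.2.le⟩]
    exact hknonneg t ⟨ht.1.le, ht.2.le⟩
  simp only [hIoo]
  exact l2Norm_mul_le_integral_of_kernel_nonpos (w := fun s x => v (t - s) x) hvt hv₀
    (ae_restrict_Ioo_comp_sub hslice ht.2.le) (hv.1.comp_sub_left_prod ht.2.le)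
    (hkdot.mono_set (Ioo_subset_Ioo_right ht.2.le))
    (ae_restrict_of_ae_restrict_of_subset (Ioo_subset_Ioo_right ht.2.le) hkdot_nonpos) hconv hkt

/-- **The `L₂`-norm inequality** for operators `∂ₜ(k ∗ ·)` (Vergara–Zacher): for a
nonnegative nonincreasing kernel `k ∈ H¹₁((0,T))` with derivative `kdot`, where
`∂ₜ(k ∗ w)(t) = k(0) w(t) + ∫₀ᵗ kdot(s) w(t-s) ds` acting in the time variable,
any `v ∈ L₂((0,T)×Ω)` and `v₀ ∈ L₂(Ω)` satisfy, for a.e. `t ∈ (0,T)`,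
`∫_Ω v ∂ₜ(k ∗ [v - v₀]) dx ≥ ‖v(t)‖_{L₂(Ω)} ∂ₜ(k ∗ [‖v(·)‖_{L₂(Ω)} - ‖v₀‖_{L₂(Ω)}])(t)`. -/
theorem L2_norm_inequality
    (d : ℕ) (T : ℝ) (hT : 0 < T)
    (Ω : Set (EuclideanSpace ℝ (Fin d))) (hΩ : IsOpen Ω)
    (k kdot : ℝ → ℝ)
    (hkdot : IntegrableOn kdot (Ioo 0 T))
    (hk : ∀ t ∈ Icc 0 T, k t = k 0 + ∫ s in (0:ℝ)..t, kdot s)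
    (hknonneg : ∀ t ∈ Icc 0 T, 0 ≤ k t)
    (hkmono : ∀ s ∈ Icc 0 T, ∀ t ∈ Icc 0 T, s ≤ t → k t ≤ k s)
    (v : ℝ → EuclideanSpace ℝ (Fin d) → ℝ)
    (hv : MemLp (fun p : ℝ × EuclideanSpace ℝ (Fin d) => v p.1 p.2) 2
      ((volume.restrict (Ioo 0 T)).prod (volume.restrict Ω)))
    (v₀ : EuclideanSpace ℝ (Fin d) → ℝ)
    (hv₀ : MemLp v₀ 2 (volume.restrict Ω))
    (N : ℝ → ℝ) (hN : ∀ t, N t = (∫ x in Ω, (v t x) ^ 2) ^ (1/2 : ℝ))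
    (N₀ : ℝ) (hN₀ : N₀ = (∫ x in Ω, (v₀ x) ^ 2) ^ (1/2 : ℝ)) :
    ∀ᵐ t ∂(volume.restrict (Ioo 0 T)),
      ∫ x in Ω, v t x *
          (k 0 * (v t x - v₀ x) + ∫ s in (0:ℝ)..t, kdot s * (v (t - s) x - v₀ x))
        ≥ N t * (k 0 * (N t - N₀) + ∫ s in (0:ℝ)..t, kdot s * (N (t - s) - N₀)) :=
  L2_norm_inequality_general d T Ω k kdot hkdot hk hknonneg hkmono v hv v₀ hv₀ N hN N₀ hN₀
end

section
/- Let ℋ be a real Hilbert space with scalar product (·,·)_ℋ and let T > 0. Let k be absolutely continuous on [0,T] with derivative k̇ ∈ L₁(0,T), and let v ∈ L₂((0,T);ℋ). Then for almost every t ∈ (0,T): (∂_t(k ∗ v)(t), v(t))_ℋ = (1/2)·∂_t(k ∗ ‖v(·)‖²_ℋ)(t) + (1/2)·k(t)·‖v(t)‖²_ℋ + (1/2)·∫₀ᵗ (−k̇(s))·‖v(t) − v(t−s)‖²_ℋ ds. -/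
open MeasureTheory Set
open scoped RealInnerProductSpace

/-! Expanding `‖v(t) - v(t-s)‖²` by the polarization identity and integrating against `k̇(s)`
turns the last integral into `-(k(t) - k(0))‖v(t)‖² + 2 (∫₀ᵗ k̇(s) v(t-s) ds, v(t)) - (k̇ ∗ ‖v‖²)(t)`,
after which the identity is linear algebra. The only analytic input is that for a.e. `t` the
integrands `k̇(s) v(t-s)` and `k̇(s) ‖v(t-s)‖²` are integrable on `(0,t)`, which is Fubini's theorem
for the convolution of the integrable functions `k̇` and `v`, resp. `‖v‖²`, extended by zero. -/

theorem inner_smul_add_integral_smul_eq {α E : Type*} [NormedAddCommGroup E]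
    [InnerProductSpace ℝ E] [CompleteSpace E] {_ : MeasurableSpace α} {μ : Measure α}
    {a : α → ℝ} {w : α → E} (c : ℝ) (x : E) (ha : Integrable a μ)
    (haw : Integrable (fun s => a s • w s) μ) (haw2 : Integrable (fun s => a s * ‖w s‖ ^ 2) μ) :
    ⟪c • x + ∫ s, a s • w s ∂μ, x⟫
      = (1/2 : ℝ) * (c * ‖x‖ ^ 2 + ∫ s, a s * ‖w s‖ ^ 2 ∂μ)
        + (1/2 : ℝ) * (c + ∫ s, a s ∂μ) * ‖x‖ ^ 2
        + (1/2 : ℝ) * ∫ s, -a s * ‖x - w s‖ ^ 2 ∂μ := by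
  have hcross_int : Integrable (fun s => a s * ⟪x, w s⟫) μ := by
    simpa only [real_inner_smul_right] using haw.const_inner (𝕜 := ℝ) x
  have hcross : ∫ s, a s * ⟪x, w s⟫ ∂μ = ⟪x, ∫ s, a s • w s ∂μ⟫ := by
    simp_rw [← integral_inner (𝕜 := ℝ) haw x, real_inner_smul_right]
  have hpolar : ∫ s, -a s * ‖x - w s‖ ^ 2 ∂μ
      = -((∫ s, a s ∂μ) * ‖x‖ ^ 2) + 2 * ⟪x, ∫ s, a s • w s ∂μ⟫
        - ∫ s, a s * ‖w s‖ ^ 2 ∂μ :=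
    calc ∫ s, -a s * ‖x - w s‖ ^ 2 ∂μ
        = ∫ s, (-(a s * ‖x‖ ^ 2) + 2 * (a s * ⟪x, w s⟫) - a s * ‖w s‖ ^ 2) ∂μ := by
          congr with s
          rw [norm_sub_sq_real]
          ring
      _ = _ := by
          have h1 : Integrable (fun s => -(a s * ‖x‖ ^ 2)) μ := (ha.mul_const _).neg
          have h2 : Integrable (fun s => 2 * (a s * ⟪x, w s⟫)) μ := hcross_int.const_mul 2
          have h12 : Integrable (fun s => -(a s * ‖x‖ ^ 2) + 2 * (a s * ⟪x, w s⟫)) μ :=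
            h1.add h2
          rw [integral_sub h12 haw2, integral_add h1 h2, integral_neg,
            integral_mul_const, integral_const_mul, hcross]
  rw [hpolar, inner_add_left, real_inner_smul_left, real_inner_self_eq_norm_sq, real_inner_comm]
  ring

theorem ae_intervalIntegrable_smul_comp_sub {𝕜 E : Type*} [NontriviallyNormedField 𝕜]
    [NormedAddCommGroup E] [NormedSpace 𝕜 E] {K : ℝ → 𝕜} {f : ℝ → E} {T : ℝ}
    (hK : IntegrableOn K (Ioo 0 T)) (hf : IntegrableOn f (Ioo 0 T)) :
    ∀ᵐ t ∂volume.restrict (Ioo 0 T),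
      IntervalIntegrable (fun s => K s • f (t - s)) volume 0 t := by
  have hconv := (hK.integrable_indicator measurableSet_Ioo).ae_convolution_exists
    (ContinuousLinearMap.lsmul 𝕜 𝕜) (hf.integrable_indicator measurableSet_Ioo)
  filter_upwards [ae_restrict_of_ae hconv, ae_restrict_mem measurableSet_Ioo]
    with t ht ⟨ht0, htT⟩
  rw [intervalIntegrable_iff_integrableOn_Ioo_of_le ht0.le]
  refine ht.integrableOn.congr_fun (fun s hs => ?_) measurableSet_Ioo
  have hs' : t - s ∈ Ioo 0 T := ⟨by linarith [hs.2], by linarith [hs.1]⟩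
  simp [indicator_of_mem (Ioo_subset_Ioo_right htT.le hs), indicator_of_mem hs']

theorem hilbert_fundamental_identity_general
    {ℋ : Type*} [NormedAddCommGroup ℋ] [InnerProductSpace ℝ ℋ] [CompleteSpace ℋ]
    (T : ℝ)
    (k kdot : ℝ → ℝ)
    (hkdot : IntegrableOn kdot (Ioo 0 T))
    (hk : ∀ t ∈ Icc 0 T, k t = k 0 + ∫ s in (0:ℝ)..t, kdot s)
    (v : ℝ → ℋ)
    (hv : MemLp v 2 (volume.restrict (Ioo 0 T))) :
    ∀ᵐ t ∂(volume.restrict (Ioo 0 T)),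
      ⟪k 0 • v t + ∫ s in (0:ℝ)..t, kdot s • v (t - s), v t⟫
        = (1/2 : ℝ) * (k 0 * ‖v t‖ ^ 2 + ∫ s in (0:ℝ)..t, kdot s * ‖v (t - s)‖ ^ 2)
          + (1/2 : ℝ) * k t * ‖v t‖ ^ 2
          + (1/2 : ℝ) * ∫ s in (0:ℝ)..t, (-(kdot s)) * ‖v t - v (t - s)‖ ^ 2 := by
  filter_upwards [ae_intervalIntegrable_smul_comp_sub hkdot (hv.integrable one_le_two),
    ae_intervalIntegrable_smul_comp_sub hkdot hv.norm.integrable_sq,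
    ae_restrict_mem measurableSet_Ioo] with t hkv hkv2 ⟨ht0, htT⟩
  have hkdot_t : IntegrableOn kdot (Ioc 0 t) := hkdot.mono_set (Ioc_subset_Ioo_right htT)
  rw [hk t ⟨ht0.le, htT.le⟩]
  simp only [intervalIntegral.integral_of_le ht0.le]
  exact inner_smul_add_integral_smul_eq (k 0) (v t) hkdot_t hkv.1 hkv2.1

/-- **The Hilbert space fundamental identity** basic to energy estimates: for a real
Hilbert space `ℋ`, a kernel `k ∈ H¹₁((0,T))` with derivative `kdot` (so that
`∂ₜ(k ∗ w)(t) = k(0) w(t) + ∫₀ᵗ kdot(s) w(t-s) ds`), and `v ∈ L₂((0,T);ℋ)`,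
for a.e. `t ∈ (0,T)`:
`(∂ₜ(k ∗ v)(t), v(t))_ℋ = ½ ∂ₜ(k ∗ ‖v(·)‖²)(t) + ½ k(t) ‖v(t)‖² + ½ ∫₀ᵗ (-kdot(s)) ‖v(t)-v(t-s)‖² ds`. -/
theorem hilbert_fundamental_identity
    {ℋ : Type*} [NormedAddCommGroup ℋ] [InnerProductSpace ℝ ℋ] [CompleteSpace ℋ]
    (T : ℝ) (hT : 0 < T)
    (k kdot : ℝ → ℝ)
    (hkdot : IntegrableOn kdot (Ioo 0 T))
    (hk : ∀ t ∈ Icc 0 T, k t = k 0 + ∫ s in (0:ℝ)..t, kdot s)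
    (v : ℝ → ℋ)
    (hv : MemLp v 2 (volume.restrict (Ioo 0 T))) :
    ∀ᵐ t ∂(volume.restrict (Ioo 0 T)),
      ⟪k 0 • v t + ∫ s in (0:ℝ)..t, kdot s • v (t - s), v t⟫
        = (1/2 : ℝ) * (k 0 * ‖v t‖ ^ 2 + ∫ s in (0:ℝ)..t, kdot s * ‖v (t - s)‖ ^ 2)
          + (1/2 : ℝ) * k t * ‖v t‖ ^ 2
          + (1/2 : ℝ) * ∫ s in (0:ℝ)..t, (-(kdot s)) * ‖v t - v (t - s)‖ ^ 2 :=
  hilbert_fundamental_identity_general T k kdot hkdot hk v hv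
end
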